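/- arXiv:1007.5112 — 12 statements merged into one kernel-verified Lean document; each statement's English description precedes it below -/
import Mathlib

section
/- The solution of the n-state problem is unique: if x and x′ both satisfy x_i ≥ 0 for all i and N − diag(x), N − diag(x′) positive semidefinite, and both maximize the success probability p over this feasible set (i.e., p(x) = p(x′) ≥ p(y) for every feasible y), then x = x′. -/
/-!
If `x ≠ x'` were both optimal, so would be their midpoint `z`, the feasible set being convex and
`p` linear. A kernel vector of `N - diag z` lies in the kernels of both `N - diag x` and
`N - diag x'`, so it is annihilated by `diag (x - x')` and vanishes at any coordinate `i` with
`x i ≠ x' i`. Hence `eᵢ` lies in the range of the positive semidefinite matrix `N - diag z`, and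
Cauchy–Schwarz for the form `N - diag z` shows that `N - diag z - ε eᵢ eᵢᴴ` stays positive
semidefinite for some `ε > 0`. Raising `zᵢ` by `ε` keeps the point feasible and increases `p` by
`ηᵢ ε > 0`, contradicting optimality.
-/

open ComplexOrder

namespace Matrix

section Diagonal

variable {ι 𝕜 : Type*} [DecidableEq ι] [RCLike 𝕜]

theorem sub_diagonal_midpoint (N : Matrix ι ι 𝕜) (x x' : ι → ℝ) :
    N - diagonal (fun i => (((x i + x' i) / 2 : ℝ) : 𝕜)) =
      (2⁻¹ : ℝ) • ((N - diagonal (fun i => (x i : 𝕜))) +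
        (N - diagonal (fun i => (x' i : 𝕜)))) := by
  ext i j
  by_cases hij : i = j
  · subst hij; simp [RCLike.real_smul_eq_coe_mul, map_ofNat]; ring
  · simp [hij, RCLike.real_smul_eq_coe_mul, map_ofNat]; ring

theorem PosSemidef.sub_diagonal_midpoint {N : Matrix ι ι 𝕜} {x x' : ι → ℝ}
    (hx : (N - diagonal (fun i => (x i : 𝕜))).PosSemidef)
    (hx' : (N - diagonal (fun i => (x' i : 𝕜))).PosSemidef) :
    (N - diagonal (fun i => (((x i + x' i) / 2 : ℝ) : 𝕜))).PosSemidef := by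
  rw [Matrix.sub_diagonal_midpoint]
  exact (hx.add hx').smul (by norm_num)

theorem sub_diagonal_add_single (N : Matrix ι ι 𝕜) (z : ι → ℝ) (i : ι) (ε : ℝ) :
    N - diagonal (fun j => ((z j + (Pi.single i ε : ι → ℝ) j : ℝ) : 𝕜)) =
      (N - diagonal (fun j => (z j : 𝕜))) - diagonal (Pi.single i (ε : 𝕜)) := by
  rw [sub_sub, diagonal_add]
  congr 2
  ext j
  by_cases hj : j = i
  · subst hj; simp
  · simp [hj]

theorem smul_vecMulVec_single_one (i : ι) (ε : ℝ) :
    ε • vecMulVec (Pi.single i (1 : 𝕜)) (star (Pi.single i 1)) =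
      diagonal (Pi.single i (ε : 𝕜)) := by
  rw [← Pi.single_star, star_one, ← single_eq_single_vecMulVec_single, diagonal_single,
    smul_single, RCLike.real_smul_eq_coe_mul, mul_one]

end Diagonal

variable {ι 𝕜 : Type*} [Fintype ι] [RCLike 𝕜]

theorem IsHermitian.exists_mulVec_eq [DecidableEq ι] {M : Matrix ι ι 𝕜} (hM : M.IsHermitian)
    {u : ι → 𝕜} (hu : ∀ v, M *ᵥ v = 0 → star v ⬝ᵥ u = 0) : ∃ w, M *ᵥ w = u := by
  set T := toEuclideanLin M
  have hrange : LinearMap.range T = (LinearMap.ker T)ᗮ := by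
    rw [← (isSymmetric_toEuclideanLin_iff.mpr hM).orthogonal_range,
      Submodule.orthogonal_orthogonal]
  have hmem : WithLp.toLp 2 u ∈ LinearMap.range T := by
    rw [hrange, Submodule.mem_orthogonal]
    intro v hv
    rw [EuclideanSpace.inner_eq_star_dotProduct, dotProduct_comm]
    exact hu _ congr(WithLp.ofLp $hv)
  obtain ⟨w, hw⟩ := hmem
  exact ⟨WithLp.ofLp w, congr(WithLp.ofLp $hw)⟩

namespace PosSemidef

theorem mulVec_eq_zero_of_add_mulVec_eq_zero {A B : Matrix ι ι 𝕜}
    (hA : A.PosSemidef) (hB : B.PosSemidef) {v : ι → 𝕜} (h : (A + B) *ᵥ v = 0) :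
    A *ᵥ v = 0 := by
  have hsum : star v ⬝ᵥ A *ᵥ v + star v ⬝ᵥ B *ᵥ v = 0 := by
    rw [← dotProduct_add, ← add_mulVec, h, dotProduct_zero]
  rw [← hA.dotProduct_mulVec_zero_iff]
  exact ((add_eq_zero_iff_of_nonneg (hA.dotProduct_mulVec_nonneg v)
    (hB.dotProduct_mulVec_nonneg v)).mp hsum).1

theorem norm_sq_dotProduct_mulVec_le {M : Matrix ι ι 𝕜} (hM : M.PosSemidef)
    (w v : ι → 𝕜) :
    ‖star w ⬝ᵥ M *ᵥ v‖ ^ 2 ≤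
      RCLike.re (star w ⬝ᵥ M *ᵥ w) * RCLike.re (star v ⬝ᵥ M *ᵥ v) := by
  let := M.toSeminormedAddCommGroup hM
  let := M.toInnerProductSpace hM
  have hinner : ∀ x y : ι → 𝕜, (inner 𝕜 x y : 𝕜) = star x ⬝ᵥ M *ᵥ y :=
    fun x y => dotProduct_comm _ _
  have h := inner_mul_inner_self_le (𝕜 := 𝕜) w v
  rw [norm_inner_symm v w] at h
  simpa only [hinner, sq] using h

/-- With `u = M w` and `c = wᴴ M w`, Cauchy–Schwarz gives `|uᴴ v|² ≤ c · vᴴ M v`, so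
`ε = (1 + c)⁻¹` works. -/
theorem exists_pos_posSemidef_sub_smul_vecMulVec {M : Matrix ι ι 𝕜} (hM : M.PosSemidef)
    {w u : ι → 𝕜} (hw : M *ᵥ w = u) :
    ∃ ε : ℝ, 0 < ε ∧ (M - ε • vecMulVec u (star u)).PosSemidef := by
  set c := RCLike.re (star w ⬝ᵥ M *ᵥ w)
  have hc : 0 ≤ c := hM.re_dotProduct_nonneg w
  set ε := (1 + c)⁻¹
  have hεc : ε * c ≤ 1 := by
    rw [inv_mul_le_iff₀ (by positivity)]
    linarith
  refine ⟨ε, by positivity, .of_dotProduct_mulVec_nonneg ?_ fun v => ?_⟩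
  · exact hM.isHermitian.sub ((posSemidef_vecMulVec_self_star u).isHermitian.smul (.all ε))
  obtain ⟨q, hq0, hq⟩ := RCLike.nonneg_iff_exists_ofReal.mp (hM.dotProduct_mulVec_nonneg v)
  set a := star w ⬝ᵥ M *ᵥ v
  have hua : star u ⬝ᵥ v = a := by
    rw [← hw, star_mulVec, ← dotProduct_mulVec, hM.isHermitian.eq]
  have hCS : ‖a‖ ^ 2 ≤ c * q := by
    simpa [← hq] using hM.norm_sq_dotProduct_mulVec_le w v
  have hquad : star v ⬝ᵥ (M - ε • vecMulVec u (star u)) *ᵥ v =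
      ((q - ε * ‖a‖ ^ 2 : ℝ) : 𝕜) := by
    rw [sub_mulVec, dotProduct_sub, smul_mulVec, vecMulVec_mulVec, hua, dotProduct_smul,
      op_smul_eq_smul, dotProduct_smul, star_dotProduct v u, hua, ← hq, smul_eq_mul,
      RCLike.star_def, RCLike.mul_conj, RCLike.real_smul_eq_coe_mul]
    push_cast
    rfl
  rw [hquad, RCLike.ofReal_nonneg, sub_nonneg]
  calc ε * ‖a‖ ^ 2 ≤ ε * (c * q) := by gcongr
    _ = (ε * c) * q := by ring
    _ ≤ q := mul_le_of_le_one_left hq0 hεc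

variable [DecidableEq ι]

theorem exists_pos_posSemidef_sub_diagonal_single {M : Matrix ι ι 𝕜} (hM : M.PosSemidef)
    {i : ι} (hker : ∀ v, M *ᵥ v = 0 → v i = 0) :
    ∃ ε : ℝ, 0 < ε ∧ (M - diagonal (Pi.single i (ε : 𝕜))).PosSemidef := by
  obtain ⟨w, hw⟩ := hM.isHermitian.exists_mulVec_eq (u := Pi.single i 1) fun v hv => by
    rw [dotProduct_single, Pi.star_apply, hker v hv, star_zero, zero_mul]
  obtain ⟨ε, hε, hεM⟩ := hM.exists_pos_posSemidef_sub_smul_vecMulVec hw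
  rw [smul_vecMulVec_single_one] at hεM
  exact ⟨ε, hε, hεM⟩

theorem apply_eq_zero_of_mulVec_sub_diagonal_midpoint {N : Matrix ι ι 𝕜} {x x' : ι → ℝ}
    (hx : (N - diagonal (fun i => (x i : 𝕜))).PosSemidef)
    (hx' : (N - diagonal (fun i => (x' i : 𝕜))).PosSemidef) {i : ι} (hi : x i ≠ x' i)
    {v : ι → 𝕜}
    (hv : (N - diagonal (fun i => (((x i + x' i) / 2 : ℝ) : 𝕜))) *ᵥ v = 0) :
    v i = 0 := by
  rw [Matrix.sub_diagonal_midpoint, smul_mulVec, smul_eq_zero] at hv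
  have hsum := hv.resolve_left (by norm_num)
  have hAv := hx.mulVec_eq_zero_of_add_mulVec_eq_zero hx' hsum
  have hBv := hx'.mulVec_eq_zero_of_add_mulVec_eq_zero hx (add_comm (N - _) _ ▸ hsum)
  have hdiff : diagonal (fun j => (x' j : 𝕜) - x j) *ᵥ v = 0 := by
    rw [← diagonal_sub, ← sub_sub_sub_cancel_left _ _ N, sub_mulVec, hAv, hBv, sub_zero]
  have := congrFun hdiff i
  rw [mulVec_diagonal, Pi.zero_apply, mul_eq_zero, sub_eq_zero] at this
  exact this.resolve_left (by exact_mod_cast hi.symm)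

end PosSemidef

end Matrix

open Matrix

theorem unique_solution_n_state_problem_general
    (n : ℕ)
    (N : Matrix (Fin n) (Fin n) ℂ)
    (η : Fin n → ℝ) (hη : ∀ i, 0 < η i)
    (x x' : Fin n → ℝ)
    (hx0 : ∀ i, 0 ≤ x i) (hx'0 : ∀ i, 0 ≤ x' i)
    (hxF : (N - Matrix.diagonal (fun i => (x i : ℂ))).PosSemidef)
    (hx'F : (N - Matrix.diagonal (fun i => (x' i : ℂ))).PosSemidef)
    (hxOpt : ∀ y : Fin n → ℝ, (∀ i, 0 ≤ y i) →
      (N - Matrix.diagonal (fun i => (y i : ℂ))).PosSemidef →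
      ∑ i, η i * y i ≤ ∑ i, η i * x i)
    (hx'Opt : ∀ y : Fin n → ℝ, (∀ i, 0 ≤ y i) →
      (N - Matrix.diagonal (fun i => (y i : ℂ))).PosSemidef →
      ∑ i, η i * y i ≤ ∑ i, η i * x' i) :
    x = x' := by
  by_contra hne
  obtain ⟨i, hi⟩ := Function.ne_iff.mp hne
  obtain ⟨ε, hε, hεF⟩ :=
    (hxF.sub_diagonal_midpoint hx'F).exists_pos_posSemidef_sub_diagonal_single
      fun v hv => hxF.apply_eq_zero_of_mulVec_sub_diagonal_midpoint hx'F hi hv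
  have hy0 : ∀ j, 0 ≤ (x j + x' j) / 2 + (Pi.single i ε : Fin n → ℝ) j := fun j =>
    add_nonneg (by linarith [hx0 j, hx'0 j])
      ((Pi.single_nonneg.mpr hε.le : (0 : Fin n → ℝ) ≤ Pi.single i ε) j)
  have hyF : (N - diagonal fun j =>
      (((x j + x' j) / 2 + (Pi.single i ε : Fin n → ℝ) j : ℝ) : ℂ)).PosSemidef :=
    sub_diagonal_add_single N (fun j => (x j + x' j) / 2) i ε ▸ hεF
  have hpy : ∑ j, η j * ((x j + x' j) / 2 + (Pi.single i ε : Fin n → ℝ) j) =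
      (∑ j, η j * x j + ∑ j, η j * x' j) / 2 + η i * ε := by
    simp [mul_add, Finset.sum_add_distrib, mul_div_assoc', ← Finset.sum_div, Pi.single_apply]
  linarith [hxOpt _ hy0 hyF, hx'Opt x hx0 hxF, mul_pos (hη i) hε]

/-- Uniqueness of the solution of the `n`-state unambiguous discrimination problem:
if `x` and `x'` are both feasible (nonnegative components and `N - diag x` positive
semidefinite) and both maximize the success probability `p(x) = ∑ i, η i * x i`
over the feasible set, then `x = x'`. -/
theorem unique_solution_n_state_problem
    (n : ℕ) (hn : 1 ≤ n)
    (N : Matrix (Fin n) (Fin n) ℂ) (hN : N.PosDef) (hNdiag : ∀ i, N i i = 1)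
    (η : Fin n → ℝ) (hη : ∀ i, 0 < η i) (hηsum : ∑ i, η i = 1)
    (x x' : Fin n → ℝ)
    (hx0 : ∀ i, 0 ≤ x i) (hx'0 : ∀ i, 0 ≤ x' i)
    (hxF : (N - Matrix.diagonal (fun i => (x i : ℂ))).PosSemidef)
    (hx'F : (N - Matrix.diagonal (fun i => (x' i : ℂ))).PosSemidef)
    (hxOpt : ∀ y : Fin n → ℝ, (∀ i, 0 ≤ y i) →
      (N - Matrix.diagonal (fun i => (y i : ℂ))).PosSemidef →
      ∑ i, η i * y i ≤ ∑ i, η i * x i)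
    (hx'Opt : ∀ y : Fin n → ℝ, (∀ i, 0 ≤ y i) →
      (N - Matrix.diagonal (fun i => (y i : ℂ))).PosSemidef →
      ∑ i, η i * y i ≤ ∑ i, η i * x' i) :
    x = x' :=
  unique_solution_n_state_problem_general n N η hη x x' hx0 hx'0 hxF hx'F hxOpt hx'Opt
end

section
/- If x and x′ are both solutions of the n-state problem, then they agree in at least one component: there exists an index i₀ with x_{i₀} = x′_{i₀}. -/
/-!
The midpoint `y` of two solutions is feasible, since the constraint is convex, and optimal, since
`p` is linear. An optimum cannot leave `N - diag(y)` positive definite: otherwise one coordinate of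
`y` could be raised a little. Hence `N - diag(y)` has a nonzero kernel vector `v`. As
`N - diag(y)` is the average of the positive semidefinite matrices `N - diag(x)` and
`N - diag(x')`, the vector `v` lies in the kernel of both, so `diag(x - x') v = 0`, and `x`, `x'`
agree at every index where `v` does not vanish.
-/

open scoped ComplexOrder MatrixOrder
open Matrix

namespace Matrix

variable {𝕜 ι : Type*} [RCLike 𝕜] [Fintype ι]

theorem PosSemidef.mulVec_eq_zero_of_add_mulVec_eq_zero_s1 {A B : Matrix ι ι 𝕜}
    (hA : A.PosSemidef) (hB : B.PosSemidef) {v : ι → 𝕜} (h : (A + B) *ᵥ v = 0) :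
    A *ᵥ v = 0 := by
  have hsum : star v ⬝ᵥ A *ᵥ v + star v ⬝ᵥ B *ᵥ v = 0 := by
    rw [← dotProduct_add, ← add_mulVec, h, dotProduct_zero]
  rw [← hA.dotProduct_mulVec_zero_iff]
  exact ((add_eq_zero_iff_of_nonneg (hA.dotProduct_mulVec_nonneg v)
    (hB.dotProduct_mulVec_nonneg v)).mp hsum).1

theorem PosSemidef.exists_mulVec_eq_zero_of_not_posDef [DecidableEq ι] {A : Matrix ι ι 𝕜}
    (hA : A.PosSemidef) (h : ¬ A.PosDef) : ∃ v ≠ 0, A *ᵥ v = 0 := by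
  rw [hA.posDef_iff_det_ne_zero, not_not] at h
  exact exists_mulVec_eq_zero_iff.mpr h

theorem PosDef.exists_pos_posSemidef_sub_diagonal [DecidableEq ι] [Nonempty ι]
    {A : Matrix ι ι 𝕜} (hA : A.PosDef) :
    ∃ ε > 0, ∀ d : ι → ℝ, (∀ i, d i ≤ ε) → (A - diagonal fun i => (d i : 𝕜)).PosSemidef := by
  obtain ⟨ε, hε, hεA⟩ := (CFC.exists_pos_algebraMap_le_iff hA.isHermitian.isSelfAdjoint).mpr
    fun _ hr => hA.isStrictlyPositive.spectrum_pos hr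
  refine ⟨ε, hε, fun d hd => ?_⟩
  have hsplit : A - diagonal (fun i => (d i : 𝕜)) =
      (A - algebraMap ℝ _ ε) + diagonal fun i => ((ε - d i : ℝ) : 𝕜) := by
    rw [algebraMap_eq_diagonal]
    ext i j
    rcases eq_or_ne i j with rfl | hij
    · simp
    · simp [diagonal_apply_ne _ hij]
  rw [hsplit]
  exact hεA.add (PosSemidef.diagonal fun i => by simpa using hd i)

end Matrix

namespace NStateProblem

variable {𝕜 ι : Type*} [RCLike 𝕜] [DecidableEq ι]

theorem sub_diagonal_smul_add_smul (N : Matrix ι ι 𝕜) (x y : ι → ℝ) {a b : ℝ} (hab : a + b = 1) :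
    N - diagonal (fun i => ((a • x + b • y) i : 𝕜)) =
      a • (N - diagonal fun i => (x i : 𝕜)) + b • (N - diagonal fun i => (y i : 𝕜)) := by
  ext i j
  rcases eq_or_ne i j with rfl | hij
  · obtain rfl : b = 1 - a := by linarith
    simp [Matrix.sub_apply, RCLike.real_smul_eq_coe_mul]
    ring
  · simp only [Matrix.sub_apply, Matrix.add_apply, Matrix.smul_apply, diagonal_apply_ne _ hij,
      sub_zero, ← add_smul, hab, one_smul]

def feasibleSet (N : Matrix ι ι 𝕜) : Set (ι → ℝ) :=
  {x | (∀ i, 0 ≤ x i) ∧ (N - diagonal fun i => (x i : 𝕜)).PosSemidef}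

theorem convex_feasibleSet (N : Matrix ι ι 𝕜) : Convex ℝ (feasibleSet N) := by
  rintro x ⟨hx0, hxN⟩ y ⟨hy0, hyN⟩ a b ha hb hab
  refine ⟨fun i => ?_, ?_⟩
  · simp only [Pi.add_apply, Pi.smul_apply, smul_eq_mul]
    exact add_nonneg (mul_nonneg ha (hx0 i)) (mul_nonneg hb (hy0 i))
  · rw [sub_diagonal_smul_add_smul N x y hab]
    exact (hxN.smul ha).add (hyN.smul hb)

variable [Fintype ι]

theorem not_posDef_of_isMaxOn [Nonempty ι] {N : Matrix ι ι 𝕜} {η x : ι → ℝ} (hη : ∀ i, 0 < η i)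
    (hx : x ∈ feasibleSet N) (hmax : IsMaxOn (η ⬝ᵥ ·) (feasibleSet N) x) :
    ¬ (N - diagonal fun i => (x i : 𝕜)).PosDef := by
  intro hPD
  obtain ⟨ε, hε, hεN⟩ := hPD.exists_pos_posSemidef_sub_diagonal
  obtain ⟨j⟩ := ‹Nonempty ι›
  have hz : x + Pi.single j ε ∈ feasibleSet N := by
    refine ⟨fun i => add_nonneg (hx.1 i) ?_, ?_⟩
    · exact (Pi.single_nonneg.mpr hε.le : (0 : ι → ℝ) ≤ Pi.single j ε) i
    · have hsplit : N - diagonal (fun i => ((x + Pi.single j ε : ι → ℝ) i : 𝕜)) =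
          (N - diagonal fun i => (x i : 𝕜)) -
            diagonal fun i => ((Pi.single j ε : ι → ℝ) i : 𝕜) := by
        rw [sub_sub, diagonal_add]
        simp
      rw [hsplit]
      refine hεN _ fun i => ?_
      rcases eq_or_ne i j with rfl | hij
      · simp
      · simp [hij, hε.le]
  have hle := hmax hz
  simp only [Set.mem_ofPred_eq, dotProduct_add, dotProduct_single] at hle
  nlinarith [hη j]

theorem mulVec_eq_zero_of_smul_add_smul {N : Matrix ι ι 𝕜} {x y : ι → ℝ} {a b : ℝ}
    (ha : 0 < a) (hb : 0 < b) (hab : a + b = 1) (hx : x ∈ feasibleSet N) (hy : y ∈ feasibleSet N)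
    {v : ι → 𝕜} (h : (N - diagonal fun i => ((a • x + b • y) i : 𝕜)) *ᵥ v = 0) :
    (N - diagonal fun i => (x i : 𝕜)) *ᵥ v = 0 ∧ (N - diagonal fun i => (y i : 𝕜)) *ᵥ v = 0 := by
  rw [sub_diagonal_smul_add_smul N x y hab] at h
  have hxv := (hx.2.smul ha.le).mulVec_eq_zero_of_add_mulVec_eq_zero_s1 (hy.2.smul hb.le) h
  have hyv := (hy.2.smul hb.le).mulVec_eq_zero_of_add_mulVec_eq_zero_s1 (hx.2.smul ha.le)
    (by rwa [add_comm] at h)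
  rw [smul_mulVec, smul_eq_zero_iff_right ha.ne'] at hxv
  rw [smul_mulVec, smul_eq_zero_iff_right hb.ne'] at hyv
  exact ⟨hxv, hyv⟩

theorem eq_of_mulVec_sub_diagonal_eq_zero {N : Matrix ι ι 𝕜} {x y : ι → ℝ} {v : ι → 𝕜}
    (hx : (N - diagonal fun i => (x i : 𝕜)) *ᵥ v = 0)
    (hy : (N - diagonal fun i => (y i : 𝕜)) *ᵥ v = 0) {i : ι} (hi : v i ≠ 0) : x i = y i := by
  have := congrFun (hx.trans hy.symm) i
  simp only [sub_mulVec, mulVec_diagonal, Pi.sub_apply, sub_right_inj] at this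
  exact_mod_cast mul_right_cancel₀ hi this

end NStateProblem

open NStateProblem in
theorem solutions_agree_in_some_component_general
    (n : ℕ) (hn : 1 ≤ n)
    (N : Matrix (Fin n) (Fin n) ℂ)
    (η : Fin n → ℝ) (hη : ∀ i, 0 < η i)
    (x x' : Fin n → ℝ)
    (hx0 : ∀ i, 0 ≤ x i) (hx'0 : ∀ i, 0 ≤ x' i)
    (hxF : (N - Matrix.diagonal (fun i => (x i : ℂ))).PosSemidef)
    (hx'F : (N - Matrix.diagonal (fun i => (x' i : ℂ))).PosSemidef)
    (hxOpt : ∀ y : Fin n → ℝ, (∀ i, 0 ≤ y i) →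
      (N - Matrix.diagonal (fun i => (y i : ℂ))).PosSemidef →
      ∑ i, η i * y i ≤ ∑ i, η i * x i)
    (hx'Opt : ∀ y : Fin n → ℝ, (∀ i, 0 ≤ y i) →
      (N - Matrix.diagonal (fun i => (y i : ℂ))).PosSemidef →
      ∑ i, η i * y i ≤ ∑ i, η i * x' i) :
    ∃ i₀, x i₀ = x' i₀ := by
  have : Nonempty (Fin n) := ⟨⟨0, hn⟩⟩
  have hx : x ∈ feasibleSet N := ⟨hx0, hxF⟩
  have hx' : x' ∈ feasibleSet N := ⟨hx'0, hx'F⟩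
  have hpx : η ⬝ᵥ x = η ⬝ᵥ x' := le_antisymm (hx'Opt x hx0 hxF) (hxOpt x' hx'0 hx'F)
  set y : Fin n → ℝ := (2⁻¹ : ℝ) • x + (2⁻¹ : ℝ) • x'
  have hy : y ∈ feasibleSet N :=
    convex_feasibleSet N hx hx' (by norm_num) (by norm_num) (by norm_num)
  have hyMax : IsMaxOn (η ⬝ᵥ ·) (feasibleSet N) y := by
    have hpy : η ⬝ᵥ y = η ⬝ᵥ x := by
      simp only [y, dotProduct_add, dotProduct_smul, ← hpx, smul_eq_mul]
      ring
    refine isMaxOn_iff.mpr fun z hz => ?_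
    rw [hpy]
    exact hxOpt z hz.1 hz.2
  obtain ⟨v, hv, hyv⟩ :=
    hy.2.exists_mulVec_eq_zero_of_not_posDef (not_posDef_of_isMaxOn hη hy hyMax)
  obtain ⟨hxv, hx'v⟩ :=
    mulVec_eq_zero_of_smul_add_smul (by norm_num) (by norm_num) (by norm_num) hx hx' hyv
  obtain ⟨i₀, hi₀⟩ := Function.ne_iff.mp hv
  exact ⟨i₀, eq_of_mulVec_sub_diagonal_eq_zero hxv hx'v hi₀⟩

/-- If `x` and `x'` are both solutions of the `n`-state problem, then they agree
in at least one component. -/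
theorem solutions_agree_in_some_component
    (n : ℕ) (hn : 1 ≤ n)
    (N : Matrix (Fin n) (Fin n) ℂ) (hN : N.PosDef) (hNdiag : ∀ i, N i i = 1)
    (η : Fin n → ℝ) (hη : ∀ i, 0 < η i) (hηsum : ∑ i, η i = 1)
    (x x' : Fin n → ℝ)
    (hx0 : ∀ i, 0 ≤ x i) (hx'0 : ∀ i, 0 ≤ x' i)
    (hxF : (N - Matrix.diagonal (fun i => (x i : ℂ))).PosSemidef)
    (hx'F : (N - Matrix.diagonal (fun i => (x' i : ℂ))).PosSemidef)
    (hxOpt : ∀ y : Fin n → ℝ, (∀ i, 0 ≤ y i) →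
      (N - Matrix.diagonal (fun i => (y i : ℂ))).PosSemidef →
      ∑ i, η i * y i ≤ ∑ i, η i * x i)
    (hx'Opt : ∀ y : Fin n → ℝ, (∀ i, 0 ≤ y i) →
      (N - Matrix.diagonal (fun i => (y i : ℂ))).PosSemidef →
      ∑ i, η i * y i ≤ ∑ i, η i * x' i) :
    ∃ i₀, x i₀ = x' i₀ :=
  solutions_agree_in_some_component_general n hn N η hη x x' hx0 hx'0 hxF hx'F hxOpt hx'Opt
end

section
/- At any solution x of the n-state problem the constraint matrix is singular: det(N − diag(x)) = 0. -/
open ComplexOrder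

/-! If `N - diag x` were nonsingular it would be positive definite, hence would still dominate
`ε • 1` for some `ε > 0`. Then `x + ε` is feasible and has success probability `p x + ε`,
contradicting the optimality of `x`. -/

open scoped MatrixOrder in
theorem Matrix.PosDef.exists_pos_posSemidef_sub_smul_one {n 𝕜 : Type*} [Fintype n]
    [DecidableEq n] [RCLike 𝕜] {A : Matrix n n 𝕜} (hA : A.PosDef) :
    ∃ ε : ℝ, 0 < ε ∧ (A - (ε : 𝕜) • 1).PosSemidef := by
  cases isEmpty_or_nonempty n
  · exact ⟨1, one_pos, Subsingleton.elim 0 (A - _) ▸ .zero⟩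
  obtain ⟨ε, hε, hεA⟩ := (CFC.exists_pos_algebraMap_le_iff hA.isHermitian.isSelfAdjoint).2
    fun _ hx ↦ hA.isStrictlyPositive.spectrum_pos hx
  refine ⟨ε, hε, ?_⟩
  rwa [Matrix.le_iff, Algebra.algebraMap_eq_smul_one, RCLike.real_smul_eq_coe_smul (K := 𝕜)]
    at hεA

theorem det_eq_zero_at_solution_general
    (n : ℕ)
    (N : Matrix (Fin n) (Fin n) ℂ)
    (η : Fin n → ℝ) (hηsum : ∑ i, η i = 1)
    (x : Fin n → ℝ)
    (hx0 : ∀ i, 0 ≤ x i)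
    (hxF : (N - Matrix.diagonal (fun i => (x i : ℂ))).PosSemidef)
    (hxOpt : ∀ y : Fin n → ℝ, (∀ i, 0 ≤ y i) →
      (N - Matrix.diagonal (fun i => (y i : ℂ))).PosSemidef →
      ∑ i, η i * y i ≤ ∑ i, η i * x i) :
    (N - Matrix.diagonal (fun i => (x i : ℂ))).det = 0 := by
  by_contra hdet
  obtain ⟨ε, hε, hshift⟩ :=
    (hxF.posDef_iff_det_ne_zero.2 hdet).exists_pos_posSemidef_sub_smul_one
  have hshift_eq : N - Matrix.diagonal (fun i => ((x i + ε : ℝ) : ℂ))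
      = N - Matrix.diagonal (fun i => (x i : ℂ)) - (ε : ℂ) • 1 := by
    rw [sub_sub, Matrix.smul_one_eq_diagonal, Matrix.diagonal_add]
    push_cast
    rfl
  have hgain : ∑ i, η i * (x i + ε) = ∑ i, η i * x i + ε := by
    simp only [mul_add, Finset.sum_add_distrib, ← Finset.sum_mul, hηsum, one_mul]
  have hle := hxOpt (fun i => x i + ε) (fun i => by linarith [hx0 i]) (hshift_eq ▸ hshift)
  linarith

/-- At any solution `x` of the `n`-state problem the constraint matrix is singular:
`det (N - diag x) = 0`. -/
theorem det_eq_zero_at_solution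
    (n : ℕ) (hn : 1 ≤ n)
    (N : Matrix (Fin n) (Fin n) ℂ) (hN : N.PosDef) (hNdiag : ∀ i, N i i = 1)
    (η : Fin n → ℝ) (hη : ∀ i, 0 < η i) (hηsum : ∑ i, η i = 1)
    (x : Fin n → ℝ)
    (hx0 : ∀ i, 0 ≤ x i)
    (hxF : (N - Matrix.diagonal (fun i => (x i : ℂ))).PosSemidef)
    (hxOpt : ∀ y : Fin n → ℝ, (∀ i, 0 ≤ y i) →
      (N - Matrix.diagonal (fun i => (y i : ℂ))).PosSemidef →
      ∑ i, η i * y i ≤ ∑ i, η i * x i) :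
    (N - Matrix.diagonal (fun i => (x i : ℂ))).det = 0 :=
  det_eq_zero_at_solution_general n N η hηsum x hx0 hxF hxOpt
end

section
/- Property (II): let x^R be a solution of the relaxed n-state problem and let S = { i : x^R_i < 0 } be nonempty. Then any solution x of the n-state problem has a vanishing component on S: there exists i ∈ S with x_i = 0. -/
/-!
Suppose `x` is positive on `S`. The segment from `x` towards `xR` stays nonnegative for a short
while, so optimality of `x` gives `p(xR) ≤ p(x)`, where `p(y) = η ⬝ᵥ y`; hence `p(x) = p(xR)`
and the midpoint `m` of `x` and `xR` is again a relaxed solution. A kernel vector of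
`N - diag m` lies in the kernels of both `N - diag x` and `N - diag xR`, so it vanishes at any
`j ∈ S`, where `x j ≠ xR j`. Then `e_j` is in the range of the positive semidefinite matrix
`N - diag m`, and Cauchy–Schwarz shows that `N - diag (m + ε e_j)` is still positive
semidefinite for some `ε > 0`, contradicting the optimality of `m`.
-/

open Matrix ComplexOrder Filter Topology

section PosSemidef
variable {ι 𝕜 : Type*} [Fintype ι] [RCLike 𝕜]

lemma Matrix.PosSemidef.norm_dotProduct_mulVec_sq_le {M : Matrix ι ι 𝕜} (hM : M.PosSemidef)
    (u v : ι → 𝕜) :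
    ‖star u ⬝ᵥ M *ᵥ v‖ ^ 2 ≤
      RCLike.re (star u ⬝ᵥ M *ᵥ u) * RCLike.re (star v ⬝ᵥ M *ᵥ v) := by
  let := M.toSeminormedAddCommGroup hM
  let := M.toInnerProductSpace hM
  have h := inner_mul_inner_self_le (𝕜 := 𝕜) u v
  have inner_eq (x y : ι → 𝕜) : inner 𝕜 x y = star x ⬝ᵥ M *ᵥ y := dotProduct_comm _ _
  rwa [norm_inner_symm v u, ← sq, inner_eq, inner_eq, inner_eq] at h

lemma Matrix.PosSemidef.mulVec_eq_zero_of_add_mulVec_eq_zero_s4 {A B : Matrix ι ι 𝕜}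
    (hA : A.PosSemidef) (hB : B.PosSemidef) {v : ι → 𝕜} (hv : (A + B) *ᵥ v = 0) :
    A *ᵥ v = 0 := by
  have hsum : star v ⬝ᵥ A *ᵥ v + star v ⬝ᵥ B *ᵥ v = 0 := by
    rw [← dotProduct_add, ← add_mulVec, hv, dotProduct_zero]
  have hA0 : star v ⬝ᵥ A *ᵥ v = 0 :=
    ((add_eq_zero_iff_of_nonneg (hA.dotProduct_mulVec_nonneg v)
      (hB.dotProduct_mulVec_nonneg v)).mp hsum).1
  exact (hA.dotProduct_mulVec_zero_iff v).mp hA0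

variable [DecidableEq ι]

lemma Matrix.IsHermitian.exists_mulVec_eq_single {M : Matrix ι ι 𝕜} (hM : M.IsHermitian)
    {j : ι} (h : ∀ v, M *ᵥ v = 0 → v j = 0) : ∃ u, M *ᵥ u = Pi.single j 1 := by
  set T := toEuclideanLin M
  have hT : T.IsSymmetric := isSymmetric_toEuclideanLin_iff.mpr hM
  have hmem : EuclideanSpace.single j (1 : 𝕜) ∈ (LinearMap.range T)ᗮᗮ := by
    rw [hT.orthogonal_range]
    intro v hv
    rw [EuclideanSpace.inner_single_right, h v (congrArg WithLp.ofLp hv)]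
    simp
  rw [Submodule.orthogonal_orthogonal] at hmem
  obtain ⟨u, hu⟩ := hmem
  exact ⟨u, congrArg WithLp.ofLp hu⟩

lemma Matrix.PosSemidef.exists_posSemidef_sub_diagonal_single {M : Matrix ι ι 𝕜}
    (hM : M.PosSemidef) {j : ι} (h : ∀ v, M *ᵥ v = 0 → v j = 0) :
    ∃ ε : ℝ, 0 < ε ∧ (M - diagonal (Pi.single j (ε : 𝕜))).PosSemidef := by
  obtain ⟨u, hu⟩ := hM.isHermitian.exists_mulVec_eq_single h
  have hvj (v : ι → 𝕜) : star u ⬝ᵥ M *ᵥ v = v j := by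
    rw [dotProduct_mulVec, ← hM.isHermitian.eq, ← star_mulVec, hu, Pi.star_single, star_one,
      single_one_dotProduct]
  set c := RCLike.re (star u ⬝ᵥ M *ᵥ u)
  have hcs (v : ι → 𝕜) : ‖v j‖ ^ 2 ≤ c * RCLike.re (star v ⬝ᵥ M *ᵥ v) :=
    hvj v ▸ hM.norm_dotProduct_mulVec_sq_le u v
  have hc : 0 < c := by
    refine (hM.re_dotProduct_nonneg u).lt_of_ne fun hc0 => ?_
    have h1 := hcs (Pi.single j 1)
    norm_num [c, ← hc0] at h1
  refine ⟨c⁻¹, inv_pos.mpr hc, .of_dotProduct_mulVec_nonneg (hM.isHermitian.sub ?_) fun v => ?_⟩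
  · exact isHermitian_diagonal_iff.mpr fun i => by
      by_cases hi : i = j <;> simp [hi, IsSelfAdjoint]
  · have hdiag : star v ⬝ᵥ diagonal (Pi.single j ((c⁻¹ : ℝ) : 𝕜)) *ᵥ v
        = ((c⁻¹ * ‖v j‖ ^ 2 : ℝ) : 𝕜) := by
      simp only [dotProduct, Pi.star_apply, RCLike.star_def, mulVec_diagonal, Pi.single_apply,
        mul_ite, ite_mul, mul_zero, zero_mul, Finset.sum_ite_eq', Finset.mem_univ, if_true]
      push_cast
      rw [← RCLike.conj_mul]
      ring
    have hq : star v ⬝ᵥ M *ᵥ v = ((RCLike.re (star v ⬝ᵥ M *ᵥ v) : ℝ) : 𝕜) := by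
      obtain ⟨r, -, hr⟩ := RCLike.nonneg_iff_exists_ofReal.mp (hM.dotProduct_mulVec_nonneg v)
      rw [← hr, RCLike.ofReal_re]
    rw [sub_mulVec, dotProduct_sub, hdiag, hq, ← RCLike.ofReal_sub, RCLike.ofReal_nonneg,
      sub_nonneg, inv_mul_le_iff₀ hc]
    exact hcs v

end PosSemidef

lemma eventually_nonneg_smul_add_smul {ι : Type*} [Finite ι] {x y : ι → ℝ} (hx : ∀ i, 0 ≤ x i)
    (hxy : ∀ i, y i < 0 → 0 < x i) :
    ∀ᶠ t in 𝓝[>] (0 : ℝ), ∀ i, 0 ≤ ((1 - t) • x + t • y) i := by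
  refine eventually_all.mpr fun i => ?_
  simp only [Pi.add_apply, Pi.smul_apply, smul_eq_mul]
  rcases (hx i).eq_or_lt with hx0 | hxpos
  · have hy : 0 ≤ y i := not_lt.mp fun hy => (hxy i hy).ne hx0
    filter_upwards [self_mem_nhdsWithin] with t (ht : 0 < t)
    simpa [← hx0] using mul_nonneg ht.le hy
  · have hc : Continuous fun t : ℝ => (1 - t) * x i + t * y i := by fun_prop
    have hlim := (hc.tendsto 0).eventually_const_lt (by simpa using hxpos)
    exact nhdsWithin_le_nhds (hlim.mono fun t ht => ht.le)

section NStateProblem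
variable {ι : Type*} [DecidableEq ι]

def IsFeasible (N : Matrix ι ι ℂ) (x : ι → ℝ) : Prop :=
  (N - diagonal fun i => (x i : ℂ)).PosSemidef

lemma sub_diagonal_smul_add_smul (N : Matrix ι ι ℂ) {a b : ℝ} (hab : a + b = 1) (x y : ι → ℝ) :
    N - diagonal (fun i => ((a • x + b • y) i : ℂ)) =
      a • (N - diagonal fun i => (x i : ℂ)) + b • (N - diagonal fun i => (y i : ℂ)) := by
  have hd : diagonal (fun i => ((a • x + b • y) i : ℂ)) =
      a • diagonal (fun i => (x i : ℂ)) + b • diagonal fun i => (y i : ℂ) := by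
    rw [← diagonal_smul, ← diagonal_smul, diagonal_add]
    congr 1
    ext i
    simp
  rw [hd, smul_sub, smul_sub]
  conv_lhs => rw [← one_smul ℝ N, ← hab, add_smul]
  abel

lemma convex_setOf_isFeasible (N : Matrix ι ι ℂ) : Convex ℝ {x : ι → ℝ | IsFeasible N x} := by
  intro x hx y hy a b ha hb hab
  show (N - _).PosSemidef
  rw [sub_diagonal_smul_add_smul N hab]
  exact (hx.smul ha).add (hy.smul hb)

variable [Fintype ι]

def IsRelaxedSolution (N : Matrix ι ι ℂ) (η z : ι → ℝ) : Prop :=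
  IsFeasible N z ∧ ∀ y, IsFeasible N y → η ⬝ᵥ y ≤ η ⬝ᵥ z

def IsSolution (N : Matrix ι ι ℂ) (η x : ι → ℝ) : Prop :=
  (∀ i, 0 ≤ x i) ∧ IsFeasible N x ∧
    ∀ y, (∀ i, 0 ≤ y i) → IsFeasible N y → η ⬝ᵥ y ≤ η ⬝ᵥ x

lemma IsFeasible.apply_eq_zero_of_mulVec_eq_zero {N : Matrix ι ι ℂ} {x y : ι → ℝ}
    (hx : IsFeasible N x) (hy : IsFeasible N y) {a b : ℝ} (ha : 0 < a) (hb : 0 < b)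
    (hab : a + b = 1) {v : ι → ℂ}
    (hv : (N - diagonal fun i => ((a • x + b • y) i : ℂ)) *ᵥ v = 0) {j : ι} (hj : x j ≠ y j) :
    v j = 0 := by
  rw [sub_diagonal_smul_add_smul N hab] at hv
  have hax := (hx.smul ha.le).mulVec_eq_zero_of_add_mulVec_eq_zero_s4 (hy.smul hb.le) hv
  rw [add_comm] at hv
  have hby := (hy.smul hb.le).mulVec_eq_zero_of_add_mulVec_eq_zero_s4 (hx.smul ha.le) hv
  have hxj := congrFun hax j
  have hyj := congrFun hby j
  simp only [smul_mulVec, sub_mulVec, Pi.smul_apply, Pi.sub_apply, mulVec_diagonal,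
    Complex.real_smul, Pi.zero_apply, mul_eq_zero, Complex.ofReal_eq_zero, ha.ne', hb.ne',
    sub_eq_zero, false_or] at hxj hyj
  by_contra hvj
  exact hj (by exact_mod_cast mul_right_cancel₀ hvj (hxj.symm.trans hyj))

lemma IsRelaxedSolution.exists_mulVec_eq_zero_apply_ne_zero {N : Matrix ι ι ℂ} {η z : ι → ℝ}
    (hz : IsRelaxedSolution N η z) {j : ι} (hηj : 0 < η j) :
    ∃ v, (N - diagonal fun i => (z i : ℂ)) *ᵥ v = 0 ∧ v j ≠ 0 := by
  by_contra! h
  obtain ⟨ε, hε, hpsd⟩ := Matrix.PosSemidef.exists_posSemidef_sub_diagonal_single hz.1 h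
  have hfeas : IsFeasible N (z + Pi.single j ε : ι → ℝ) := by
    have hd : N - diagonal (fun i => ((z + Pi.single j ε : ι → ℝ) i : ℂ)) =
        (N - diagonal fun i => (z i : ℂ)) - diagonal (Pi.single j (ε : ℂ)) := by
      rw [sub_sub, diagonal_add]
      congr 2
      ext i
      rcases eq_or_ne i j with rfl | hij <;> simp [*]
    rw [IsFeasible, hd]
    exact hpsd
  have := hz.2 _ hfeas
  rw [dotProduct_add, dotProduct_single] at this
  nlinarith

lemma IsSolution.dotProduct_le {N : Matrix ι ι ℂ} {η x xR : ι → ℝ} (hx : IsSolution N η x)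
    (hxR : IsFeasible N xR) (hpos : ∀ i, xR i < 0 → 0 < x i) :
    η ⬝ᵥ xR ≤ η ⬝ᵥ x := by
  obtain ⟨hx0, hxF, hxOpt⟩ := hx
  obtain ⟨t, ht_nonneg, ht⟩ :=
    ((eventually_nonneg_smul_add_smul hx0 hpos).and (Ioo_mem_nhdsGT one_pos)).exists
  have := hxOpt _ ht_nonneg
    (convex_setOf_isFeasible N hxF hxR (sub_nonneg.mpr ht.2.le) ht.1.le (by ring))
  simp only [dotProduct_add, dotProduct_smul, smul_eq_mul] at this
  nlinarith [ht.1]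

end NStateProblem

theorem solution_vanishes_on_negative_set_general
    (n : ℕ)
    (N : Matrix (Fin n) (Fin n) ℂ)
    (η : Fin n → ℝ) (hη : ∀ i, 0 < η i)
    (xR : Fin n → ℝ)
    (hxRF : (N - Matrix.diagonal (fun i => (xR i : ℂ))).PosSemidef)
    (hxROpt : ∀ y : Fin n → ℝ,
      (N - Matrix.diagonal (fun i => (y i : ℂ))).PosSemidef →
      ∑ i, η i * y i ≤ ∑ i, η i * xR i)
    (hS : ∃ i, xR i < 0)
    (x : Fin n → ℝ)
    (hx0 : ∀ i, 0 ≤ x i)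
    (hxF : (N - Matrix.diagonal (fun i => (x i : ℂ))).PosSemidef)
    (hxOpt : ∀ y : Fin n → ℝ, (∀ i, 0 ≤ y i) →
      (N - Matrix.diagonal (fun i => (y i : ℂ))).PosSemidef →
      ∑ i, η i * y i ≤ ∑ i, η i * x i) :
    ∃ i, xR i < 0 ∧ x i = 0 := by
  have hxR : IsRelaxedSolution N η xR := ⟨hxRF, hxROpt⟩
  by_contra! hne
  have hpos (i : Fin n) (hi : xR i < 0) : 0 < x i := (hx0 i).lt_of_ne' (hne i hi)
  have hp : η ⬝ᵥ x = η ⬝ᵥ xR :=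
    le_antisymm (hxR.2 x hxF) (IsSolution.dotProduct_le ⟨hx0, hxF, hxOpt⟩ hxRF hpos)
  set m := (1 / 2 : ℝ) • x + (1 / 2 : ℝ) • xR
  have hm : IsRelaxedSolution N η m := by
    refine ⟨convex_setOf_isFeasible N hxF hxRF (by norm_num) (by norm_num) (by norm_num),
      fun y hy => ?_⟩
    simp only [m, dotProduct_add, dotProduct_smul, smul_eq_mul, hp]
    linarith [hxR.2 y hy]
  obtain ⟨j, hj⟩ := hS
  obtain ⟨v, hv, hvj⟩ := hm.exists_mulVec_eq_zero_apply_ne_zero (hη j)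
  exact hvj (IsFeasible.apply_eq_zero_of_mulVec_eq_zero hxF hxRF (by norm_num) (by norm_num)
    (by norm_num) hv (hj.trans (hpos j hj)).ne')

/-- Property (II): if `xR` is a solution of the relaxed `n`-state problem with a
nonempty set `S = {i | xR i < 0}` of negative components, then any solution `x`
of the `n`-state problem vanishes at some index of `S`. -/
theorem solution_vanishes_on_negative_set
    (n : ℕ) (hn : 1 ≤ n)
    (N : Matrix (Fin n) (Fin n) ℂ) (hN : N.PosDef) (hNdiag : ∀ i, N i i = 1)
    (η : Fin n → ℝ) (hη : ∀ i, 0 < η i) (hηsum : ∑ i, η i = 1)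
    (xR : Fin n → ℝ)
    (hxRF : (N - Matrix.diagonal (fun i => (xR i : ℂ))).PosSemidef)
    (hxROpt : ∀ y : Fin n → ℝ,
      (N - Matrix.diagonal (fun i => (y i : ℂ))).PosSemidef →
      ∑ i, η i * y i ≤ ∑ i, η i * xR i)
    (hS : ∃ i, xR i < 0)
    (x : Fin n → ℝ)
    (hx0 : ∀ i, 0 ≤ x i)
    (hxF : (N - Matrix.diagonal (fun i => (x i : ℂ))).PosSemidef)
    (hxOpt : ∀ y : Fin n → ℝ, (∀ i, 0 ≤ y i) →
      (N - Matrix.diagonal (fun i => (y i : ℂ))).PosSemidef →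
      ∑ i, η i * y i ≤ ∑ i, η i * x i) :
    ∃ i, xR i < 0 ∧ x i = 0 :=
  solution_vanishes_on_negative_set_general n N η hη xR hxRF hxROpt hS x hx0 hxF hxOpt
end

section
/- No-error structure of POVM elements: let V be an n-dimensional complex inner product space, φ_1,…,φ_n a basis of V, and for each i let φ̃_i be the unique vector with ⟨φ̃_i, φ_j⟩ = δ_ij for all j (the reciprocal/dual family). Fix an index i₀ and let E : V → V be a positive semidefinite selfadjoint operator with ⟨φ_j, E φ_j⟩ = 0 for all j ≠ i₀. Then there exists a real number x ≥ 0 such that E is the rank-one operator E v = x ⟨φ̃_{i₀}, v⟩ φ̃_{i₀} for all v ∈ V. -/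
/-!
Cauchy–Schwarz for the semi-inner product `⟪x, E y⟫` shows that `⟪φ j, E φ j⟫ = 0` forces
`E φ j = 0` for `j ≠ i₀`. Since the coefficient of `φ i₀` in `v` is `⟪φt i₀, v⟫`, this makes `E`
the rank-one map `v ↦ ⟪φt i₀, v⟫ • E φ i₀`, and selfadjointness of a rank-one map forces
`E φ i₀ = ⟪φ i₀, E φ i₀⟫ • φt i₀`, the coefficient being real and nonnegative.
-/

section

open RCLike

variable {𝕜 E : Type*} [RCLike 𝕜] [NormedAddCommGroup E] [InnerProductSpace 𝕜 E]

local notation "⟪" x ", " y "⟫" => inner 𝕜 x y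

namespace LinearMap

@[reducible]
def IsPositive.preInnerProductSpaceCore {T : E →ₗ[𝕜] E} (hT : T.IsPositive) :
    PreInnerProductSpace.Core 𝕜 E where
  inner x y := ⟪x, T y⟫
  conj_inner_symm x y := by rw [inner_conj_symm, hT.isSymmetric]
  re_inner_nonneg := hT.re_inner_nonneg_right
  add_left x y z := inner_add_left x y (T z)
  smul_left x y r := inner_smul_left x (T y) r

theorem IsPositive.apply_eq_zero_of_inner_eq_zero {T : E →ₗ[𝕜] E} (hT : T.IsPositive) {x : E}
    (hx : ⟪x, T x⟫ = 0) : T x = 0 := by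
  -- Cauchy–Schwarz for the semi-inner product `⟪x, T y⟫`, applied to `x` and `T x`.
  have hcs := @InnerProductSpace.Core.inner_mul_inner_self_le 𝕜 E _ _ _
    hT.preInnerProductSpaceCore x (T x)
  change ‖⟪x, T (T x)⟫‖ * ‖⟪T x, T x⟫‖ ≤ re ⟪x, T x⟫ * re ⟪T x, T (T x)⟫ at hcs
  rw [← hT.isSymmetric, hx, map_zero, zero_mul, inner_self_eq_norm_sq_to_K, norm_pow,
    norm_algebraMap'] at hcs
  have : ‖T x‖ ^ 2 * ‖T x‖ ^ 2 = 0 := le_antisymm (by simpa using hcs) (by positivity)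
  simpa using this

theorem IsSymmetric.apply_eq_re_inner_smul {T : E →ₗ[𝕜] E} (hT : T.IsSymmetric) {a b : E}
    (h : ∀ v, T v = ⟪a, v⟫ • T b) : T b = (re ⟪b, T b⟫ : 𝕜) • a := by
  refine ext_inner_left 𝕜 fun u => ?_
  rw [← hT, h u, inner_smul_left, inner_conj_symm, inner_smul_right, hT.coe_re_inner_self_apply,
    ← hT, mul_comm]

end LinearMap

namespace Module.Basis

variable {ι : Type*}

theorem apply_eq_repr_smul_of_forall_ne {R M N : Type*} [Semiring R] [AddCommMonoid M]
    [Module R M] [AddCommMonoid N] [Module R N] (φ : Basis ι R M) {f : M →ₗ[R] N} {i : ι}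
    (hf : ∀ j, j ≠ i → f (φ j) = 0) (v : M) : f v = φ.repr v i • f (φ i) := by
  classical
  have : f = (φ.coord i).smulRight (f (φ i)) := φ.ext fun j => by
    by_cases hj : j = i
    · simp [hj]
    · simp [hf j hj, Ne.symm hj]
  exact LinearMap.congr_fun this v

theorem inner_eq_repr_of_inner_eq_ite [DecidableEq ι] (φ : Basis ι 𝕜 E) {ψ : ι → E}
    (h : ∀ i j, ⟪ψ i, φ j⟫ = if i = j then 1 else 0) (i : ι) (v : E) : ⟪ψ i, v⟫ = φ.repr v i := by
  have : innerₛₗ 𝕜 (ψ i) = φ.coord i := φ.ext fun j => by simp [h, Finsupp.single_apply, eq_comm]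
  exact LinearMap.congr_fun this v

end Module.Basis

end

theorem no_error_povm_element_rank_one_general
    {V : Type*} [NormedAddCommGroup V] [InnerProductSpace ℂ V]
    (n : ℕ) (φ : Module.Basis (Fin n) ℂ V)
    (φt : Fin n → V)
    (hrecip : ∀ i j, (inner ℂ (φt i) (φ j) : ℂ) = if i = j then 1 else 0)
    (i₀ : Fin n)
    (E : V →ₗ[ℂ] V) (hE : E.IsSymmetric)
    (hEpos : ∀ v : V, 0 ≤ (inner ℂ v (E v) : ℂ).re)
    (hNoErr : ∀ j, j ≠ i₀ → (inner ℂ (φ j) (E (φ j)) : ℂ) = 0) :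
    ∃ x : ℝ, 0 ≤ x ∧ ∀ v : V, E v = ((x : ℂ) * inner ℂ (φt i₀) v) • φt i₀ := by
  have hpos : E.IsPositive := ⟨hE, fun v => by rw [inner_re_symm]; exact hEpos v⟩
  have hrank : ∀ v, E v = inner ℂ (φt i₀) v • E (φ i₀) := fun v => by
    rw [φ.inner_eq_repr_of_inner_eq_ite hrecip]
    exact φ.apply_eq_repr_smul_of_forall_ne
      (fun j hj => hpos.apply_eq_zero_of_inner_eq_zero (hNoErr j hj)) v
  refine ⟨_, hEpos (φ i₀), fun v => ?_⟩
  conv_lhs => rw [hrank v, hE.apply_eq_re_inner_smul hrank, smul_smul, mul_comm]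
  rfl

/-- No-error structure of POVM elements: if `E` is a positive semidefinite
selfadjoint operator with `⟨φ j, E φ j⟩ = 0` for all `j ≠ i₀`, where `φ` is a
basis with reciprocal family `φt` (`⟨φt i, φ j⟩ = δ_ij`), then `E` is a
nonnegative multiple of the rank-one projector onto `φt i₀`:
`E v = x ⟨φt i₀, v⟩ φt i₀` for some real `x ≥ 0`. -/
theorem no_error_povm_element_rank_one
    {V : Type*} [NormedAddCommGroup V] [InnerProductSpace ℂ V]
    [FiniteDimensional ℂ V]
    (n : ℕ) (φ : Module.Basis (Fin n) ℂ V)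
    (φt : Fin n → V)
    (hrecip : ∀ i j, (inner ℂ (φt i) (φ j) : ℂ) = if i = j then 1 else 0)
    (i₀ : Fin n)
    (E : V →ₗ[ℂ] V) (hE : E.IsSymmetric)
    (hEpos : ∀ v : V, 0 ≤ (inner ℂ v (E v) : ℂ).re)
    (hNoErr : ∀ j, j ≠ i₀ → (inner ℂ (φ j) (E (φ j)) : ℂ) = 0) :
    ∃ x : ℝ, 0 ≤ x ∧ ∀ v : V, E v = ((x : ℂ) * inner ℂ (φt i₀) v) • φt i₀ :=
  no_error_povm_element_rank_one_general n φ φt hrecip i₀ E hE hEpos hNoErr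
end

section
/- Reduction to an (n−1)-state problem: fix n ≥ 2 and set c_i = 1 − |N_{in}|² for i = 1,…,n−1 (each c_i > 0 since N is positive definite with unit diagonal). Define the (n−1)×(n−1) matrix N′ by N′_{ij} = (N_{ij} − N_{in} N_{nj}) / √(c_i c_j) and the probabilities η′_i = η_i c_i / Σ_{k<n} η_k c_k. Then N′ is Hermitian positive definite with N′_{ii} = 1, the η′_i are positive and sum to 1, and the maximum of Σ_{i<n} η_i x_i over x ∈ ℝⁿ with x_i ≥ 0 for all i, x_n = 0, and N − diag(x) positive semidefinite equals (Σ_{k<n} η_k c_k) times the maximum of Σ_{i<n} η′_i x′_i over x′ ∈ ℝ^{n−1} with x′_i ≥ 0 and N′ − diag(x′) positive semidefinite; moreover x attains the first maximum if and only if the vector x′ with x′_i = x_i / c_i attains the second. -/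
/-!
Since `N_nn = 1` and `x_n = 0`, `N - diag x` is positive semidefinite iff its Schur complement
with respect to the last entry, `G - diag (x_1, …, x_{n-1})` with `G_ij = N_ij - N_in N_nj`, is.
The diagonal of `G` is `c`, and `G = D N' D` with `D = diag √c`, so
`G - diag x = D (N' - diag (x / c)) D`. Conjugating by the invertible `D`, `x` is feasible for
the first problem iff `x / c` is feasible for the second, and `∑ η_i x_i = S ∑ η'_i x_i / c_i`
with `S = ∑ η_k c_k > 0`: the feasible values of the first problem are those of the second
multiplied by `S`. Likewise `N'` is positive definite because `G` is, a Schur complement of a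
positive definite matrix being positive semidefinite with the same determinant.
-/

open ComplexOrder

namespace Matrix

variable {n : ℕ}

/-- The Schur complement of the last diagonal entry when that entry is `1`. -/
def schurLast {R : Type*} [Ring R] (M : Matrix (Fin (n + 1)) (Fin (n + 1)) R) :
    Matrix (Fin n) (Fin n) R :=
  of fun i j => M i.castSucc j.castSucc - M i.castSucc (Fin.last n) * M (Fin.last n) j.castSucc

section CommRing

variable {R : Type*} [CommRing R] {M : Matrix (Fin (n + 1)) (Fin (n + 1)) R}

theorem submatrix_finSumFinEquiv_eq_fromBlocks (hM : M (Fin.last n) (Fin.last n) = 1) :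
    M.submatrix finSumFinEquiv finSumFinEquiv =
      fromBlocks (of fun i j : Fin n => M i.castSucc j.castSucc)
        (of fun (i : Fin n) (_ : Fin 1) => M i.castSucc (Fin.last n))
        (of fun (_ : Fin 1) (j : Fin n) => M (Fin.last n) j.castSucc) 1 := by
  have hcast (i : Fin n) : Fin.castAdd 1 i = i.castSucc := rfl
  have hlast : Fin.natAdd n (0 : Fin 1) = Fin.last n := rfl
  ext (i | i) (j | j) <;> simp [fromBlocks, Fin.fin_one_eq_zero, hcast, hlast, hM]

theorem det_schurLast (hM : M (Fin.last n) (Fin.last n) = 1) : (schurLast M).det = M.det := by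
  have : Invertible (1 : Matrix (Fin 1) (Fin 1) R) := invertibleOne
  rw [← det_submatrix_equiv_self finSumFinEquiv, submatrix_finSumFinEquiv_eq_fromBlocks hM,
    det_fromBlocks₂₂, invOf_one, det_one, one_mul]
  congr 1
  ext i j
  simp [schurLast, mul_apply]

theorem schurLast_sub_diagonal (M : Matrix (Fin (n + 1)) (Fin (n + 1)) R) (d : Fin (n + 1) → R) :
    schurLast (M - diagonal d) = schurLast M - diagonal fun i => d i.castSucc := by
  ext i j
  rcases eq_or_ne i j with rfl | hij
  · simp [schurLast, (Fin.castSucc_lt_last i).ne']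
    ring
  · simp [schurLast, (Fin.castSucc_lt_last j).ne', hij]

end CommRing

variable {𝕜 : Type*} [RCLike 𝕜] {M : Matrix (Fin (n + 1)) (Fin (n + 1)) 𝕜}

theorem IsHermitian.posSemidef_iff_schurLast (hH : M.IsHermitian)
    (hM : M (Fin.last n) (Fin.last n) = 1) : M.PosSemidef ↔ (schurLast M).PosSemidef := by
  have hC : (of fun (_ : Fin 1) (j : Fin n) => M (Fin.last n) j.castSucc) =
      (of fun (i : Fin n) (_ : Fin 1) => M i.castSucc (Fin.last n))ᴴ := by
    ext _ j
    exact (hH.apply _ _).symm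
  have : Invertible (1 : Matrix (Fin 1) (Fin 1) 𝕜) := invertibleOne
  rw [← posSemidef_submatrix_equiv finSumFinEquiv, submatrix_finSumFinEquiv_eq_fromBlocks hM, hC,
    PosDef.fromBlocks₂₂ _ _ PosDef.one, inv_one, ← hC]
  congr!
  ext i j
  simp [schurLast, mul_apply]

theorem PosDef.schurLast (hP : M.PosDef) (hM : M (Fin.last n) (Fin.last n) = 1) :
    (schurLast M).PosDef := by
  have hS := (hP.isHermitian.posSemidef_iff_schurLast hM).1 hP.posSemidef
  rw [hS.posDef_iff_det_ne_zero, det_schurLast hM]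
  exact hP.det_pos.ne'

theorem schurLast_apply_self {N : Matrix (Fin (n + 1)) (Fin (n + 1)) ℂ} (hH : N.IsHermitian)
    (hdiag : ∀ i, N i i = 1) (i : Fin n) :
    schurLast N i i = ((1 - ‖N i.castSucc (Fin.last n)‖ ^ 2 : ℝ) : ℂ) := by
  rw [schurLast, of_apply, hdiag, ← hH.apply (Fin.last n) i.castSucc, Complex.star_def,
    Complex.mul_conj, Complex.normSq_eq_norm_sq]
  push_cast
  ring

section SqrtDiagonal

variable {m : Type*} [DecidableEq m] {c : m → ℝ}

noncomputable def sqrtDiagonal (c : m → ℝ) : Matrix m m ℂ :=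
  diagonal fun i => (√(c i) : ℂ)

theorem star_sqrtDiagonal (c : m → ℝ) : star (sqrtDiagonal c) = sqrtDiagonal c := by
  rw [star_eq_conjTranspose, sqrtDiagonal, diagonal_conjTranspose]
  congr with i
  exact Complex.conj_ofReal _

variable [Fintype m]

theorem isUnit_sqrtDiagonal (hc : ∀ i, 0 < c i) : IsUnit (sqrtDiagonal c) := by
  rw [sqrtDiagonal, isUnit_diagonal]
  exact Pi.isUnit_iff.2 fun i => isUnit_iff_ne_zero.2 <|
    Complex.ofReal_ne_zero.2 (Real.sqrt_pos.2 (hc i)).ne'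

theorem sqrtDiagonal_mul_diagonal_mul_sqrtDiagonal (hc : ∀ i, 0 ≤ c i) (y : m → ℝ) :
    sqrtDiagonal c * diagonal (fun i => (y i : ℂ)) * sqrtDiagonal c =
      diagonal fun i => ((c i * y i : ℝ) : ℂ) := by
  simp only [sqrtDiagonal, diagonal_mul_diagonal]
  congr with i
  rw [mul_right_comm, ← Complex.ofReal_mul, Real.mul_self_sqrt (hc i)]
  push_cast
  ring

theorem posSemidef_sqrtDiagonal_conj_iff (hc : ∀ i, 0 < c i) {X : Matrix m m ℂ} :
    (sqrtDiagonal c * X * sqrtDiagonal c).PosSemidef ↔ X.PosSemidef := by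
  simpa only [star_sqrtDiagonal] using
    IsUnit.posSemidef_star_right_conjugate_iff (isUnit_sqrtDiagonal hc)

theorem posDef_sqrtDiagonal_conj_iff (hc : ∀ i, 0 < c i) {X : Matrix m m ℂ} :
    (sqrtDiagonal c * X * sqrtDiagonal c).PosDef ↔ X.PosDef := by
  simpa only [star_sqrtDiagonal] using
    IsUnit.posDef_star_right_conjugate_iff (isUnit_sqrtDiagonal hc)

theorem eq_sqrtDiagonal_mul_mul_sqrtDiagonal {G X : Matrix m m ℂ} (hc : ∀ i, 0 < c i)
    (hX : ∀ i j, X i j = G i j / (√(c i * c j) : ℂ)) :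
    G = sqrtDiagonal c * X * sqrtDiagonal c := by
  ext i j
  have hij : (√(c i * c j) : ℂ) ≠ 0 :=
    Complex.ofReal_ne_zero.2 (Real.sqrt_pos.2 (mul_pos (hc i) (hc j))).ne'
  rw [sqrtDiagonal, mul_diagonal, diagonal_mul, hX, mul_right_comm, ← Complex.ofReal_mul,
    ← Real.sqrt_mul (hc i).le, mul_div_cancel₀ _ hij]

end SqrtDiagonal

end Matrix

open Matrix

theorem posSemidef_sub_diagonal_iff_of_schurLast_eq {n : ℕ}
    {N : Matrix (Fin (n + 1)) (Fin (n + 1)) ℂ} {N' : Matrix (Fin n) (Fin n) ℂ} {c : Fin n → ℝ}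
    (hH : N.IsHermitian)
    (hlast : N (Fin.last n) (Fin.last n) = 1) (hc : ∀ i, 0 < c i)
    (hG : schurLast N = sqrtDiagonal c * N' * sqrtDiagonal c) {x : Fin (n + 1) → ℝ}
    (hx : x (Fin.last n) = 0) :
    (N - diagonal fun i => (x i : ℂ)).PosSemidef ↔
      (N' - diagonal fun i => ((x i.castSucc / c i : ℝ) : ℂ)).PosSemidef := by
  have hxH : (diagonal fun i => (x i : ℂ)).IsHermitian :=
    isHermitian_diagonal_iff.2 fun i => Complex.conj_ofReal _
  have hx' : (fun i : Fin n => (x i.castSucc : ℂ)) =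
      fun i => ((c i * (x i.castSucc / c i) : ℝ) : ℂ) := by
    ext i
    rw [mul_div_cancel₀ _ (hc i).ne']
  rw [(hH.sub hxH).posSemidef_iff_schurLast (by simp [hlast, hx]), schurLast_sub_diagonal, hG,
    hx', ← sqrtDiagonal_mul_diagonal_mul_sqrtDiagonal (fun i => (hc i).le), ← sub_mul, ← mul_sub,
    posSemidef_sqrtDiagonal_conj_iff hc]

theorem setOf_exists_eq_image_mul {n : ℕ} {P : (Fin (n + 1) → ℝ) → Prop}
    {Q : (Fin n → ℝ) → Prop} {c : Fin n → ℝ} (hc : ∀ i, 0 < c i)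
    (hPQ : ∀ x, x (Fin.last n) = 0 → (P x ↔ Q fun i => x i.castSucc / c i))
    {w w' : Fin n → ℝ} {S : ℝ}
    (hval : ∀ z : Fin n → ℝ, ∑ i, w i * z i = S * ∑ i, w' i * (z i / c i)) :
    {v | ∃ x : Fin (n + 1) → ℝ, (∀ i, 0 ≤ x i) ∧ x (Fin.last n) = 0 ∧ P x ∧
        v = ∑ i : Fin n, w i * x i.castSucc} =
      (S * ·) '' {v | ∃ y : Fin n → ℝ, (∀ i, 0 ≤ y i) ∧ Q y ∧ v = ∑ i, w' i * y i} := by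
  ext v
  constructor
  · rintro ⟨x, hx0, hxl, hP, rfl⟩
    exact ⟨_, ⟨_, fun i => div_nonneg (hx0 _) (hc i).le, (hPQ x hxl).1 hP, rfl⟩,
      (hval _).symm⟩
  · rintro ⟨_, ⟨y, hy0, hQ, rfl⟩, rfl⟩
    set x : Fin (n + 1) → ℝ := Fin.snoc (fun i => c i * y i) 0
    have hy : ∀ i, x i.castSucc / c i = y i := fun i => by simp [x, (hc i).ne']
    refine ⟨x, fun i => ?_, by simp [x], (hPQ x (by simp [x])).2 (by simpa only [hy]), ?_⟩
    · refine Fin.lastCases ?_ (fun i => ?_) i <;> simp [x, mul_nonneg (hc _).le (hy0 _)]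
    · simp only [hval, hy]

theorem reduction_to_smaller_problem_general
    (n : ℕ) (hn : 1 ≤ n)
    (N : Matrix (Fin (n + 1)) (Fin (n + 1)) ℂ) (hN : N.PosDef)
    (hNdiag : ∀ i, N i i = 1)
    (η : Fin (n + 1) → ℝ) (hη : ∀ i, 0 < η i)
    (c : Fin n → ℝ)
    (hc : ∀ i, c i = 1 - ‖N i.castSucc (Fin.last n)‖ ^ 2)
    (N' : Matrix (Fin n) (Fin n) ℂ)
    (hN'def : ∀ i j, N' i j =
      (N i.castSucc j.castSucc -
        N i.castSucc (Fin.last n) * N (Fin.last n) j.castSucc) /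
      (Real.sqrt (c i * c j) : ℂ))
    (η' : Fin n → ℝ)
    (hη'def : ∀ i, η' i = η i.castSucc * c i / ∑ k, η k.castSucc * c k)
    (A B : Set ℝ)
    (hA : A = {v | ∃ x : Fin (n + 1) → ℝ, (∀ i, 0 ≤ x i) ∧
      x (Fin.last n) = 0 ∧
      (N - Matrix.diagonal (fun i => (x i : ℂ))).PosSemidef ∧
      v = ∑ i : Fin n, η i.castSucc * x i.castSucc})
    (hB : B = {v | ∃ y : Fin n → ℝ, (∀ i, 0 ≤ y i) ∧
      (N' - Matrix.diagonal (fun i => (y i : ℂ))).PosSemidef ∧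
      v = ∑ i, η' i * y i}) :
    (∀ i, 0 < c i) ∧
    N'.PosDef ∧ (∀ i, N' i i = 1) ∧ (∀ i, 0 < η' i) ∧ (∑ i, η' i = 1) ∧
    (∀ a b : ℝ, IsGreatest A a → IsGreatest B b →
      a = (∑ k : Fin n, η k.castSucc * c k) * b) ∧
    (∀ x : Fin (n + 1) → ℝ, (∀ i, 0 ≤ x i) → x (Fin.last n) = 0 →
      (N - Matrix.diagonal (fun i => (x i : ℂ))).PosSemidef →
      (IsGreatest A (∑ i : Fin n, η i.castSucc * x i.castSucc) ↔
        IsGreatest B (∑ i : Fin n, η' i * (x i.castSucc / c i)))) := by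
  have hH := hN.isHermitian
  have hG := hN.schurLast (hNdiag (Fin.last n))
  have hcpos : ∀ i, 0 < c i := fun i => by
    simpa [schurLast_apply_self hH hNdiag, ← hc] using hG.diag_pos (i := i)
  have hN'G : ∀ i j, N' i j = schurLast N i j / (√(c i * c j) : ℂ) := hN'def
  have hGN' := eq_sqrtDiagonal_mul_mul_sqrtDiagonal hcpos hN'G
  set S := ∑ k : Fin n, η k.castSucc * c k
  have hS : 0 < S :=
    Finset.sum_pos (fun k _ => mul_pos (hη _) (hcpos k)) ⟨⟨0, hn⟩, Finset.mem_univ _⟩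
  have hval (z : Fin n → ℝ) : ∑ i, η i.castSucc * z i = S * ∑ i, η' i * (z i / c i) := by
    rw [Finset.mul_sum]
    refine Finset.sum_congr rfl fun i _ => ?_
    rw [hη'def]
    field_simp [(hcpos i).ne']
  have hAB : A = (S * ·) '' B := by
    rw [hA, hB]
    exact setOf_exists_eq_image_mul hcpos
      (fun x hx => posSemidef_sub_diagonal_iff_of_schurLast_eq hH (hNdiag _) hcpos hGN' hx) hval
  have hmono : StrictMono (S * ·) := strictMono_mul_left_of_pos hS
  refine ⟨hcpos, (posDef_sqrtDiagonal_conj_iff hcpos).1 (hGN' ▸ hG), fun i => ?_,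
    fun i => ?_, ?_, fun a b ha hb => ?_, fun x _ _ _ => ?_⟩
  · rw [hN'G, schurLast_apply_self hH hNdiag, ← hc, Real.sqrt_mul_self (hcpos i).le,
      div_self (Complex.ofReal_ne_zero.2 (hcpos i).ne')]
  · rw [hη'def]
    exact div_pos (mul_pos (hη _) (hcpos i)) hS
  · simp only [hη'def, ← Finset.sum_div]
    exact div_self hS.ne'
  · exact ha.unique (hAB ▸ hmono.map_isGreatest.2 hb)
  · rw [hAB, hval, hmono.map_isGreatest]

/-- Reduction of the `(n+1)`-state problem with the constraint `x_last = 0` to an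
`n`-state problem: with `c i = 1 - |N_{i,last}|²`, reduced Gram matrix `N'`,
and reduced probabilities `η'`, the constrained maximum equals
`(∑ k, η k * c k)` times the maximum of the reduced problem, and `x` attains the
former iff `x' = x / c` attains the latter. -/
theorem reduction_to_smaller_problem
    (n : ℕ) (hn : 1 ≤ n)
    (N : Matrix (Fin (n + 1)) (Fin (n + 1)) ℂ) (hN : N.PosDef)
    (hNdiag : ∀ i, N i i = 1)
    (η : Fin (n + 1) → ℝ) (hη : ∀ i, 0 < η i) (hηsum : ∑ i, η i = 1)
    (c : Fin n → ℝ)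
    (hc : ∀ i, c i = 1 - ‖N i.castSucc (Fin.last n)‖ ^ 2)
    (N' : Matrix (Fin n) (Fin n) ℂ)
    (hN'def : ∀ i j, N' i j =
      (N i.castSucc j.castSucc -
        N i.castSucc (Fin.last n) * N (Fin.last n) j.castSucc) /
      (Real.sqrt (c i * c j) : ℂ))
    (η' : Fin n → ℝ)
    (hη'def : ∀ i, η' i = η i.castSucc * c i / ∑ k, η k.castSucc * c k)
    (A B : Set ℝ)
    (hA : A = {v | ∃ x : Fin (n + 1) → ℝ, (∀ i, 0 ≤ x i) ∧
      x (Fin.last n) = 0 ∧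
      (N - Matrix.diagonal (fun i => (x i : ℂ))).PosSemidef ∧
      v = ∑ i : Fin n, η i.castSucc * x i.castSucc})
    (hB : B = {v | ∃ y : Fin n → ℝ, (∀ i, 0 ≤ y i) ∧
      (N' - Matrix.diagonal (fun i => (y i : ℂ))).PosSemidef ∧
      v = ∑ i, η' i * y i}) :
    (∀ i, 0 < c i) ∧
    N'.PosDef ∧ (∀ i, N' i i = 1) ∧ (∀ i, 0 < η' i) ∧ (∑ i, η' i = 1) ∧
    (∀ a b : ℝ, IsGreatest A a → IsGreatest B b →
      a = (∑ k : Fin n, η k.castSucc * c k) * b) ∧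
    (∀ x : Fin (n + 1) → ℝ, (∀ i, 0 ≤ x i) → x (Fin.last n) = 0 →
      (N - Matrix.diagonal (fun i => (x i : ℂ))).PosSemidef →
      (IsGreatest A (∑ i : Fin n, η i.castSucc * x i.castSucc) ↔
        IsGreatest B (∑ i : Fin n, η' i * (x i.castSucc / c i)))) :=
  reduction_to_smaller_problem_general n hn N hN hNdiag η hη c hc N' hN'def η' hη'def A B hA hB
end

section
/- Two-state problem, intermediate regime: let 0 ≤ γ < 1, let N be the 2×2 real symmetric matrix with diagonal entries 1 and off-diagonal entries −γ, and let η_1, η_2 > 0 with η_1 + η_2 = 1. If γ² η_1 ≤ η_2 and γ² η_2 ≤ η_1 (i.e., γ ≤ √(η_2/η_1) ≤ 1/γ), then the maximum of η_1 x_1 + η_2 x_2 over x ∈ ℝ² with x_1, x_2 ≥ 0 and N − diag(x) positive semidefinite equals 1 − 2√(η_1 η_2) γ, and it is attained at x_1 = 1 − √(η_2/η_1) γ, x_2 = 1 − √(η_1/η_2) γ. -/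
/-!
`N - diag x` is positive semidefinite iff `x ≤ 1` componentwise and `γ² ≤ (1 - x₀)(1 - x₁)`.
With `η₁ + η₂ = 1` the objective is `1 - (η₁(1 - x₀) + η₂(1 - x₁))`, and AM-GM gives
`η₁(1 - x₀) + η₂(1 - x₁) ≥ 2√(η₁η₂(1 - x₀)(1 - x₁)) ≥ 2√(η₁η₂) γ`. Equality holds when
`η₁(1 - x₀) = η₂(1 - x₁)` and `(1 - x₀)(1 - x₁) = γ²`, which is the stated point; the regime
conditions are exactly what makes it nonnegative.
-/

open Matrix

theorem Matrix.posSemidef_fin_two_iff {a b c : ℝ} :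
    (!![a, c; c, b]).PosSemidef ↔ 0 ≤ a ∧ 0 ≤ b ∧ c ^ 2 ≤ a * b := by
  constructor
  · intro h
    have hdet := h.det_nonneg
    rw [det_fin_two_of] at hdet
    exact ⟨by simpa using h.diag_nonneg (i := 0), by simpa using h.diag_nonneg (i := 1),
      by nlinarith⟩
  · rintro ⟨ha, hb, hc⟩
    rw [posSemidef_iff_dotProduct_mulVec]
    refine ⟨?_, fun v => ?_⟩
    · ext i j
      fin_cases i <;> fin_cases j <;> rfl
    · have hform : star v ⬝ᵥ (!![a, c; c, b] *ᵥ v) =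
          a * v 0 ^ 2 + 2 * c * v 0 * v 1 + b * v 1 ^ 2 := by
        simp [mulVec, dotProduct, Fin.sum_univ_two]
        ring
      rw [hform]
      rcases ha.eq_or_lt with rfl | ha
      · have : c = 0 := by nlinarith [sq_nonneg c]
        subst this
        nlinarith [mul_nonneg hb (sq_nonneg (v 1))]
      · nlinarith [sq_nonneg (a * v 0 + c * v 1), mul_nonneg (sub_nonneg.2 hc) (sq_nonneg (v 1))]

theorem Matrix.fin_two_sub_diagonal (p q r s : ℝ) (x : Fin 2 → ℝ) :
    !![p, q; r, s] - diagonal x = !![p - x 0, q; r, s - x 1] := by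
  ext i j
  fin_cases i <;> fin_cases j <;> simp

theorem posSemidef_sub_diagonal_iff (γ : ℝ) (x : Fin 2 → ℝ) :
    (!![1, -γ; -γ, 1] - diagonal x).PosSemidef ↔
      x 0 ≤ 1 ∧ x 1 ≤ 1 ∧ γ ^ 2 ≤ (1 - x 0) * (1 - x 1) := by
  rw [fin_two_sub_diagonal, posSemidef_fin_two_iff, neg_sq, sub_nonneg, sub_nonneg]

theorem two_mul_sqrt_mul_mul_le {η₁ η₂ a b γ : ℝ} (hη₁ : 0 ≤ η₁) (hη₂ : 0 ≤ η₂)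
    (ha : 0 ≤ a) (hb : 0 ≤ b) (h : γ ^ 2 ≤ a * b) :
    2 * √(η₁ * η₂) * γ ≤ η₁ * a + η₂ * b := by
  refine (abs_le_of_sq_le_sq' ?_ (by positivity)).2
  calc (2 * √(η₁ * η₂) * γ) ^ 2 = 4 * (η₁ * η₂) * γ ^ 2 := by
        rw [mul_pow, mul_pow, Real.sq_sqrt (by positivity)]; ring
    _ ≤ 4 * (η₁ * a) * (η₂ * b) := by nlinarith [mul_nonneg hη₁ hη₂]
    _ ≤ (η₁ * a + η₂ * b) ^ 2 := by nlinarith [sq_nonneg (η₁ * a - η₂ * b)]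

theorem objective_le_of_posSemidef {γ η₁ η₂ : ℝ} (hη₁ : 0 ≤ η₁) (hη₂ : 0 ≤ η₂)
    (hsum : η₁ + η₂ = 1) {x : Fin 2 → ℝ}
    (hx : (!![1, -γ; -γ, 1] - diagonal x).PosSemidef) :
    η₁ * x 0 + η₂ * x 1 ≤ 1 - 2 * √(η₁ * η₂) * γ := by
  obtain ⟨hx0, hx1, hdet⟩ := (posSemidef_sub_diagonal_iff γ x).1 hx
  have := two_mul_sqrt_mul_mul_le hη₁ hη₂ (sub_nonneg.2 hx0) (sub_nonneg.2 hx1) hdet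
  linear_combination this + hsum

theorem posSemidef_sub_diagonal_one_sub_div_mul {γ u v : ℝ} (hu : 0 < u) (hv : 0 < v)
    (hγ : 0 ≤ γ) :
    (!![1, -γ; -γ, 1] - diagonal ![1 - v / u * γ, 1 - u / v * γ]).PosSemidef := by
  rw [posSemidef_sub_diagonal_iff]
  simp only [cons_val_zero, cons_val_one, sub_sub_cancel]
  refine ⟨?_, ?_, le_of_eq ?_⟩
  · linarith [show 0 ≤ v / u * γ by positivity]
  · linarith [show 0 ≤ u / v * γ by positivity]
  · field_simp

theorem two_state_intermediate_general
    (γ η₁ η₂ : ℝ) (hγ0 : 0 ≤ γ)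
    (hη₁ : 0 < η₁) (hη₂ : 0 < η₂) (hsum : η₁ + η₂ = 1)
    (h1 : γ ^ 2 * η₁ ≤ η₂) (h2 : γ ^ 2 * η₂ ≤ η₁) :
    IsGreatest {p : ℝ | ∃ x : Fin 2 → ℝ, 0 ≤ x 0 ∧ 0 ≤ x 1 ∧
        (!![1, -γ; -γ, 1] - Matrix.diagonal x).PosSemidef ∧
        p = η₁ * x 0 + η₂ * x 1}
      (1 - 2 * Real.sqrt (η₁ * η₂) * γ) ∧
    (0 ≤ 1 - Real.sqrt (η₂ / η₁) * γ ∧ 0 ≤ 1 - Real.sqrt (η₁ / η₂) * γ ∧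
      (!![1, -γ; -γ, 1] -
        Matrix.diagonal ![1 - Real.sqrt (η₂ / η₁) * γ,
          1 - Real.sqrt (η₁ / η₂) * γ]).PosSemidef ∧
      η₁ * (1 - Real.sqrt (η₂ / η₁) * γ) + η₂ * (1 - Real.sqrt (η₁ / η₂) * γ) =
        1 - 2 * Real.sqrt (η₁ * η₂) * γ) := by
  obtain ⟨u, hu, rfl⟩ : ∃ u, 0 < u ∧ u ^ 2 = η₁ := ⟨√η₁, by positivity, Real.sq_sqrt hη₁.le⟩
  obtain ⟨v, hv, rfl⟩ : ∃ v, 0 < v ∧ v ^ 2 = η₂ := ⟨√η₂, by positivity, Real.sq_sqrt hη₂.le⟩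
  have hvu : γ * u ≤ v := by
    rw [← pow_le_pow_iff_left₀ (by positivity) hv.le two_ne_zero]; linarith
  have huv : γ * v ≤ u := by
    rw [← pow_le_pow_iff_left₀ (by positivity) hu.le two_ne_zero]; linarith
  have hx0 : 0 ≤ 1 - v / u * γ := by
    rw [sub_nonneg, div_mul_eq_mul_div, div_le_one hu]; linarith
  have hx1 : 0 ≤ 1 - u / v * γ := by
    rw [sub_nonneg, div_mul_eq_mul_div, div_le_one hv]; linarith
  have hvalue : u ^ 2 * (1 - v / u * γ) + v ^ 2 * (1 - u / v * γ) = 1 - 2 * (u * v) * γ := by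
    field_simp
    linear_combination hsum
  have hvu_sqrt : √(v ^ 2 / u ^ 2) = v / u := by rw [← div_pow, Real.sqrt_sq (by positivity)]
  have huv_sqrt : √(u ^ 2 / v ^ 2) = u / v := by rw [← div_pow, Real.sqrt_sq (by positivity)]
  have hprod_sqrt : √(u ^ 2 * v ^ 2) = u * v := by rw [← mul_pow, Real.sqrt_sq (by positivity)]
  rw [hvu_sqrt, huv_sqrt, hprod_sqrt]
  have hpsd := posSemidef_sub_diagonal_one_sub_div_mul hu hv hγ0
  refine ⟨⟨⟨_, hx0, hx1, hpsd, hvalue.symm⟩, ?_⟩, hx0, hx1, hpsd, hvalue⟩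
  rintro p ⟨x, -, -, hx, rfl⟩
  rw [← hprod_sqrt]
  exact objective_le_of_posSemidef (by positivity) (by positivity) hsum hx

/-- Two-state unambiguous discrimination, intermediate regime
`γ ≤ √(η₂/η₁) ≤ 1/γ`: the maximum success probability is
`1 - 2√(η₁η₂) γ`, attained at `x₁ = 1 - √(η₂/η₁) γ`, `x₂ = 1 - √(η₁/η₂) γ`. -/
theorem two_state_intermediate
    (γ η₁ η₂ : ℝ) (hγ0 : 0 ≤ γ) (hγ1 : γ < 1)
    (hη₁ : 0 < η₁) (hη₂ : 0 < η₂) (hsum : η₁ + η₂ = 1)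
    (h1 : γ ^ 2 * η₁ ≤ η₂) (h2 : γ ^ 2 * η₂ ≤ η₁) :
    IsGreatest {p : ℝ | ∃ x : Fin 2 → ℝ, 0 ≤ x 0 ∧ 0 ≤ x 1 ∧
        (!![1, -γ; -γ, 1] - Matrix.diagonal x).PosSemidef ∧
        p = η₁ * x 0 + η₂ * x 1}
      (1 - 2 * Real.sqrt (η₁ * η₂) * γ) ∧
    (0 ≤ 1 - Real.sqrt (η₂ / η₁) * γ ∧ 0 ≤ 1 - Real.sqrt (η₁ / η₂) * γ ∧
      (!![1, -γ; -γ, 1] -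
        Matrix.diagonal ![1 - Real.sqrt (η₂ / η₁) * γ,
          1 - Real.sqrt (η₁ / η₂) * γ]).PosSemidef ∧
      η₁ * (1 - Real.sqrt (η₂ / η₁) * γ) + η₂ * (1 - Real.sqrt (η₁ / η₂) * γ) =
        1 - 2 * Real.sqrt (η₁ * η₂) * γ) :=
  two_state_intermediate_general γ η₁ η₂ hγ0 hη₁ hη₂ hsum h1 h2
end

section
/- Three states with Γ ≤ 0: let γ₁₂, γ₂₃, γ₃₁ ≥ 0 and let N be the 3×3 real symmetric matrix with diagonal entries 1 and off-diagonal entries N₁₂ = −γ₁₂, N₂₃ = −γ₂₃, N₃₁ = −γ₃₁; assume N is positive definite, and let η_1, η_2, η_3 > 0 with η_1 + η_2 + η_3 = 1. Then the maximum of Σ_i η_i x_i over x ∈ ℝ³ with N − diag(x) positive semidefinite (no sign constraint on x) equals 1 − 2√(η_1η_2) γ₁₂ − 2√(η_2η_3) γ₂₃ − 2√(η_3η_1) γ₃₁, and it is attained at x₁ = 1 − (√η_2 γ₁₂ + √η_3 γ₃₁)/√η_1, x₂ = 1 − (√η_1 γ₁₂ + √η_3 γ₂₃)/√η_2, x₃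 = 1 − (√η_1 γ₃₁ + √η_2 γ₂₃)/√η_3. -/
/-!
Put `s = (√η₁, √η₂, √η₃)`, so that the objective is `∑ sᵢ² xᵢ`. Testing `N - diag x ⪰ 0` against `s`
bounds the objective by `sᵀ N s`, which is the claimed value since `∑ ηᵢ = 1`. Conversely the
claimed maximiser is `xᵢ = (N s)ᵢ / sᵢ`: then `M = N - diag x` kills `s` and has nonpositive
off-diagonal entries (this is where `Γ ≤ 0` enters), and such a matrix is positive semidefinite
because `vᵀ M v = ½ ∑ᵢⱼ (-Mᵢⱼ) sᵢ sⱼ (vᵢ/sᵢ - vⱼ/sⱼ)²`.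
-/

open Matrix

namespace Matrix

variable {n : Type*} [Fintype n]

theorem sum_sq_mul_le_dotProduct_mulVec_of_posSemidef_sub [DecidableEq n] {A : Matrix n n ℝ}
    {x : n → ℝ} (hx : (A - diagonal x).PosSemidef) (v : n → ℝ) :
    ∑ i, v i ^ 2 * x i ≤ v ⬝ᵥ A *ᵥ v := by
  have h := hx.dotProduct_mulVec_nonneg v
  rw [star_trivial, sub_mulVec, dotProduct_sub, sub_nonneg] at h
  calc ∑ i, v i ^ 2 * x i = v ⬝ᵥ diagonal x *ᵥ v :=
        Finset.sum_congr rfl fun i _ => by rw [mulVec_diagonal]; ring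
    _ ≤ v ⬝ᵥ A *ᵥ v := h

theorem dotProduct_mulVec_eq_sum_sq_of_mulVec_eq_zero {M : Matrix n n ℝ} (hM : M.IsSymm)
    {s : n → ℝ} (hs : ∀ i, s i ≠ 0) (hMs : M *ᵥ s = 0) (v : n → ℝ) :
    v ⬝ᵥ M *ᵥ v = ∑ i, ∑ j, -(M i j * s i * s j) * (v i / s i - v j / s j) ^ 2 / 2 := by
  have hrow : ∀ i, ∑ j, M i j * s j = 0 := fun i => congrFun hMs i
  have hcol : ∀ j, ∑ i, M i j * s i = 0 := fun j => by
    simpa [hM.apply] using hrow j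
  have hterm : ∀ i j, -(M i j * s i * s j) * (v i / s i - v j / s j) ^ 2 / 2 =
      v i * (M i j * v j) - v i ^ 2 / s i / 2 * (M i j * s j)
        - v j ^ 2 / s j / 2 * (M i j * s i) := fun i j => by
    field_simp [hs i, hs j]
    ring
  simp only [hterm, Finset.sum_sub_distrib, ← Finset.mul_sum, hrow, mul_zero, sub_zero]
  rw [Finset.sum_comm (f := fun i j => v j ^ 2 / s j / 2 * (M i j * s i))]
  simp only [← Finset.mul_sum, hcol, mul_zero, Finset.sum_const_zero, sub_zero]
  rfl

theorem posSemidef_of_offDiag_nonpos_of_mulVec_eq_zero {M : Matrix n n ℝ} (hM : M.IsSymm)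
    (hoff : ∀ i j, i ≠ j → M i j ≤ 0) {s : n → ℝ} (hs : ∀ i, 0 < s i) (hMs : M *ᵥ s = 0) :
    M.PosSemidef := by
  refine .of_dotProduct_mulVec_nonneg hM fun v => ?_
  rw [star_trivial, dotProduct_mulVec_eq_sum_sq_of_mulVec_eq_zero hM (fun i => (hs i).ne') hMs]
  refine Finset.sum_nonneg fun i _ => Finset.sum_nonneg fun j _ => ?_
  obtain rfl | hij := eq_or_ne i j
  · simp
  · have : 0 ≤ -(M i j * s i * s j) := by nlinarith [hoff i j hij, mul_pos (hs i) (hs j)]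
    positivity

variable [DecidableEq n] {A : Matrix n n ℝ} {s : n → ℝ}

theorem posSemidef_sub_diagonal_mulVec_div (hA : A.IsSymm) (hoff : ∀ i j, i ≠ j → A i j ≤ 0)
    (hs : ∀ i, 0 < s i) : (A - diagonal fun i => (A *ᵥ s) i / s i).PosSemidef := by
  refine posSemidef_of_offDiag_nonpos_of_mulVec_eq_zero
    (hA.sub (isSymm_diagonal _)) (fun i j hij => ?_) hs ?_
  · simpa [diagonal_apply_ne _ hij] using hoff i j hij
  · ext i
    rw [sub_mulVec, Pi.sub_apply, mulVec_diagonal, div_mul_cancel₀ _ (hs i).ne', sub_self,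
      Pi.zero_apply]

omit [DecidableEq n] in
theorem sum_sq_mul_mulVec_div (hs : ∀ i, s i ≠ 0) :
    ∑ i, s i ^ 2 * ((A *ᵥ s) i / s i) = s ⬝ᵥ A *ᵥ s :=
  Finset.sum_congr rfl fun i _ => by field_simp [hs i]

theorem isGreatest_sum_sq_mul_of_offDiag_nonpos (hA : A.IsSymm)
    (hoff : ∀ i j, i ≠ j → A i j ≤ 0) (hs : ∀ i, 0 < s i) :
    IsGreatest {p | ∃ x, (A - diagonal x).PosSemidef ∧ p = ∑ i, s i ^ 2 * x i}
      (s ⬝ᵥ A *ᵥ s) := by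
  refine ⟨⟨_, posSemidef_sub_diagonal_mulVec_div hA hoff hs,
    (sum_sq_mul_mulVec_div fun i => (hs i).ne').symm⟩, ?_⟩
  rintro p ⟨x, hx, rfl⟩
  exact sum_sq_mul_le_dotProduct_mulVec_of_posSemidef_sub hx s

end Matrix

theorem three_state_gamma_nonpos_general
    (γ₁₂ γ₂₃ γ₃₁ η₁ η₂ η₃ : ℝ)
    (hγ₁₂ : 0 ≤ γ₁₂) (hγ₂₃ : 0 ≤ γ₂₃) (hγ₃₁ : 0 ≤ γ₃₁)
    (hη₁ : 0 < η₁) (hη₂ : 0 < η₂) (hη₃ : 0 < η₃) (hsum : η₁ + η₂ + η₃ = 1) :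
    IsGreatest {p : ℝ | ∃ x : Fin 3 → ℝ,
        (!![1, -γ₁₂, -γ₃₁; -γ₁₂, 1, -γ₂₃; -γ₃₁, -γ₂₃, 1] -
          Matrix.diagonal x).PosSemidef ∧
        p = η₁ * x 0 + η₂ * x 1 + η₃ * x 2}
      (1 - 2 * Real.sqrt (η₁ * η₂) * γ₁₂ - 2 * Real.sqrt (η₂ * η₃) * γ₂₃ -
        2 * Real.sqrt (η₃ * η₁) * γ₃₁) ∧
    ((!![1, -γ₁₂, -γ₃₁; -γ₁₂, 1, -γ₂₃; -γ₃₁, -γ₂₃, 1] -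
        Matrix.diagonal
          ![1 - (Real.sqrt η₂ * γ₁₂ + Real.sqrt η₃ * γ₃₁) / Real.sqrt η₁,
            1 - (Real.sqrt η₁ * γ₁₂ + Real.sqrt η₃ * γ₂₃) / Real.sqrt η₂,
            1 - (Real.sqrt η₁ * γ₃₁ + Real.sqrt η₂ * γ₂₃) / Real.sqrt η₃]).PosSemidef ∧
      η₁ * (1 - (Real.sqrt η₂ * γ₁₂ + Real.sqrt η₃ * γ₃₁) / Real.sqrt η₁) +
        η₂ * (1 - (Real.sqrt η₁ * γ₁₂ + Real.sqrt η₃ * γ₂₃) / Real.sqrt η₂) +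
        η₃ * (1 - (Real.sqrt η₁ * γ₃₁ + Real.sqrt η₂ * γ₂₃) / Real.sqrt η₃) =
      1 - 2 * Real.sqrt (η₁ * η₂) * γ₁₂ - 2 * Real.sqrt (η₂ * η₃) * γ₂₃ -
        2 * Real.sqrt (η₃ * η₁) * γ₃₁) := by
  set N : Matrix (Fin 3) (Fin 3) ℝ := !![1, -γ₁₂, -γ₃₁; -γ₁₂, 1, -γ₂₃; -γ₃₁, -γ₂₃, 1]
  set s : Fin 3 → ℝ := ![Real.sqrt η₁, Real.sqrt η₂, Real.sqrt η₃]
  have hs : ∀ i, 0 < s i := fun i => by fin_cases i <;> simp [s, hη₁, hη₂, hη₃]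
  have hN : N.IsSymm := by
    ext i j; fin_cases i <;> fin_cases j <;> rfl
  have hoff : ∀ i j, i ≠ j → N i j ≤ 0 := fun i j hij => by
    fin_cases i <;> fin_cases j <;> simp [N] at hij ⊢ <;> assumption
  have hobj : ∀ x : Fin 3 → ℝ, η₁ * x 0 + η₂ * x 1 + η₃ * x 2 = ∑ i, s i ^ 2 * x i := fun x => by
    simp [s, Fin.sum_univ_three, hη₁.le, hη₂.le, hη₃.le]
  have hval : s ⬝ᵥ N *ᵥ s = 1 - 2 * Real.sqrt (η₁ * η₂) * γ₁₂ - 2 * Real.sqrt (η₂ * η₃) * γ₂₃ -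
      2 * Real.sqrt (η₃ * η₁) * γ₃₁ := by
    simp [N, s, dotProduct, mulVec, Fin.sum_univ_three, Real.sqrt_mul, hη₁.le, hη₂.le, hη₃.le]
    linear_combination Real.mul_self_sqrt hη₁.le + Real.mul_self_sqrt hη₂.le +
      Real.mul_self_sqrt hη₃.le + hsum
  have hx : (fun i => (N *ᵥ s) i / s i) =
      ![1 - (Real.sqrt η₂ * γ₁₂ + Real.sqrt η₃ * γ₃₁) / Real.sqrt η₁,
        1 - (Real.sqrt η₁ * γ₁₂ + Real.sqrt η₃ * γ₂₃) / Real.sqrt η₂,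
        1 - (Real.sqrt η₁ * γ₃₁ + Real.sqrt η₂ * γ₂₃) / Real.sqrt η₃] := by
    funext i
    fin_cases i <;> simp [N, s, mulVec, dotProduct, Fin.sum_univ_three] <;> field_simp <;> ring
  have hgreat := isGreatest_sum_sq_mul_of_offDiag_nonpos hN hoff hs
  simp only [hobj, hval] at hgreat ⊢
  refine ⟨hgreat, hx ▸ posSemidef_sub_diagonal_mulVec_div hN hoff hs, ?_⟩
  refine (hobj ![_, _, _]).trans ?_
  rw [← hx, sum_sq_mul_mulVec_div fun i => (hs i).ne', hval]

/-- Three pure states with `Γ ≤ 0` (all mutual inner products real nonpositive):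
the maximum of the relaxed problem (no sign constraint on `x`) is
`1 - 2√(η₁η₂)γ₁₂ - 2√(η₂η₃)γ₂₃ - 2√(η₃η₁)γ₃₁`, attained at the indicated point. -/
theorem three_state_gamma_nonpos
    (γ₁₂ γ₂₃ γ₃₁ η₁ η₂ η₃ : ℝ)
    (hγ₁₂ : 0 ≤ γ₁₂) (hγ₂₃ : 0 ≤ γ₂₃) (hγ₃₁ : 0 ≤ γ₃₁)
    (hN : (!![1, -γ₁₂, -γ₃₁; -γ₁₂, 1, -γ₂₃; -γ₃₁, -γ₂₃, 1] :
      Matrix (Fin 3) (Fin 3) ℝ).PosDef)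
    (hη₁ : 0 < η₁) (hη₂ : 0 < η₂) (hη₃ : 0 < η₃) (hsum : η₁ + η₂ + η₃ = 1) :
    IsGreatest {p : ℝ | ∃ x : Fin 3 → ℝ,
        (!![1, -γ₁₂, -γ₃₁; -γ₁₂, 1, -γ₂₃; -γ₃₁, -γ₂₃, 1] -
          Matrix.diagonal x).PosSemidef ∧
        p = η₁ * x 0 + η₂ * x 1 + η₃ * x 2}
      (1 - 2 * Real.sqrt (η₁ * η₂) * γ₁₂ - 2 * Real.sqrt (η₂ * η₃) * γ₂₃ -
        2 * Real.sqrt (η₃ * η₁) * γ₃₁) ∧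
    ((!![1, -γ₁₂, -γ₃₁; -γ₁₂, 1, -γ₂₃; -γ₃₁, -γ₂₃, 1] -
        Matrix.diagonal
          ![1 - (Real.sqrt η₂ * γ₁₂ + Real.sqrt η₃ * γ₃₁) / Real.sqrt η₁,
            1 - (Real.sqrt η₁ * γ₁₂ + Real.sqrt η₃ * γ₂₃) / Real.sqrt η₂,
            1 - (Real.sqrt η₁ * γ₃₁ + Real.sqrt η₂ * γ₂₃) / Real.sqrt η₃]).PosSemidef ∧
      η₁ * (1 - (Real.sqrt η₂ * γ₁₂ + Real.sqrt η₃ * γ₃₁) / Real.sqrt η₁) +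
        η₂ * (1 - (Real.sqrt η₁ * γ₁₂ + Real.sqrt η₃ * γ₂₃) / Real.sqrt η₂) +
        η₃ * (1 - (Real.sqrt η₁ * γ₃₁ + Real.sqrt η₂ * γ₂₃) / Real.sqrt η₃) =
      1 - 2 * Real.sqrt (η₁ * η₂) * γ₁₂ - 2 * Real.sqrt (η₂ * η₃) * γ₂₃ -
        2 * Real.sqrt (η₃ * η₁) * γ₃₁) :=
  three_state_gamma_nonpos_general γ₁₂ γ₂₃ γ₃₁ η₁ η₂ η₃ hγ₁₂ hγ₂₃ hγ₃₁ hη₁ hη₂ hη₃ hsum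
end

section
/- Three states with Γ > 0 under the triangle condition: let α_1, α_2, α_3 > 0 and let N be the 3×3 real symmetric matrix with diagonal entries 1 and off-diagonal entries N₁₂ = α_1α_2, N₂₃ = α_2α_3, N₃₁ = α_3α_1; assume N is positive definite, and let η_1, η_2, η_3 > 0 with η_1 + η_2 + η_3 = 1. If the triangle condition holds, i.e., α_i√η_i ≤ α_j√η_j + α_k√η_k for every permutation (i,j,k) of (1,2,3), then the maximum of Σ_i η_i x_i over x ∈ ℝ³ with N − diag(x) positive semidefinite (no sign constraint) equals 1 − (η_1α_1² + η_2α_2² + η_3α_3²), and it is attained at x_i = 1 − α_i² (i = 1,2,3). Moreover, if in addition α_i ≤ 1 for all i, this x also solves the problem with the constraints x_i ≥ 0. -/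
/-!
Weak duality with an explicit dual certificate. Writing `N - diag x = diag d + α αᵀ` with
`d i = 1 - α i ^ 2 - x i`, any positive semidefinite `Z` with `Z α = 0` and `Z i i = η i` gives
`0 ≤ tr (Z (N - diag x)) = ∑ η i d i`, which is the upper bound; `x i = 1 - α i ^ 2` attains it
because there `N - diag x = α αᵀ`. Such a `Z` exists by the triangle condition: the numbers
`b i = α i √η i` are the side lengths of a triangle, the Gram matrix `W` of its side vectors
(which sum to zero) satisfies `W 1 = 0` and `W i i = b i ^ 2`, and `Z = D⁻¹ W D⁻¹` with
`D = diag α` does the job.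
-/

open Matrix

open scoped ComplexOrder MatrixOrder in
theorem Matrix.PosSemidef.trace_mul_nonneg {𝕜 n : Type*} [RCLike 𝕜] [Fintype n]
    {A B : Matrix n n 𝕜} (hA : A.PosSemidef) (hB : B.PosSemidef) : 0 ≤ (A * B).trace := by
  classical
  obtain ⟨C, rfl⟩ := CStarAlgebra.nonneg_iff_eq_star_mul_self.mp hA.nonneg
  rw [mul_assoc, trace_mul_comm, star_eq_conjTranspose]
  exact (hB.mul_mul_conjTranspose_same C).trace_nonneg

theorem Matrix.PosSemidef.sum_diag_mul_nonneg {ι : Type*} [Fintype ι] [DecidableEq ι]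
    {Z : Matrix ι ι ℝ} (hZ : Z.PosSemidef) {a d : ι → ℝ} (hZa : Z *ᵥ a = 0)
    (hM : (diagonal d + vecMulVec a a).PosSemidef) : 0 ≤ ∑ i, Z i i * d i := by
  simpa [mul_add, mul_vecMulVec, hZa, trace, mul_diagonal] using hZ.trace_mul_nonneg hM

theorem quadForm_nonneg_of_triangle {p q r : ℝ} (hr : r ≤ p + q) (hp : p ≤ q + r)
    (hq : q ≤ p + r) (s t : ℝ) :
    0 ≤ p ^ 2 * s ^ 2 + (r ^ 2 - p ^ 2 - q ^ 2) * s * t + q ^ 2 * t ^ 2 := by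
  rcases le_total 0 (s * t) with hst | hst
  · nlinarith [sq_nonneg (p * s - q * t), mul_nonneg (mul_nonneg (by linarith : 0 ≤ r - p + q)
      (by linarith : 0 ≤ r + p - q)) hst]
  · nlinarith [sq_nonneg (p * s + q * t), mul_nonpos_of_nonneg_of_nonpos (mul_nonneg
      (by linarith : 0 ≤ p + q - r) (by linarith : 0 ≤ p + q + r)) hst]

/-- The Gram matrix `⟪w i, w j⟫` of the sides `w i` of a triangle with side lengths `b i`,
oriented so that `w 0 + w 1 + w 2 = 0`; then `2 ⟪w i, w j⟫ = b k ^ 2 - b i ^ 2 - b j ^ 2`. -/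
noncomputable def triangleGram (b : Fin 3 → ℝ) : Matrix (Fin 3) (Fin 3) ℝ :=
  !![b 0 ^ 2, (b 2 ^ 2 - b 0 ^ 2 - b 1 ^ 2) / 2, (b 1 ^ 2 - b 0 ^ 2 - b 2 ^ 2) / 2;
     (b 2 ^ 2 - b 0 ^ 2 - b 1 ^ 2) / 2, b 1 ^ 2, (b 0 ^ 2 - b 1 ^ 2 - b 2 ^ 2) / 2;
     (b 1 ^ 2 - b 0 ^ 2 - b 2 ^ 2) / 2, (b 0 ^ 2 - b 1 ^ 2 - b 2 ^ 2) / 2, b 2 ^ 2]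

namespace triangleGram

variable (b : Fin 3 → ℝ)

theorem apply_self (i : Fin 3) : triangleGram b i i = b i ^ 2 := by
  fin_cases i <;> rfl

theorem mulVec_one : triangleGram b *ᵥ 1 = 0 := by
  ext i
  fin_cases i <;> simp [triangleGram, mulVec, dotProduct, Fin.sum_univ_three] <;> ring

theorem posSemidef (h₀ : b 0 ≤ b 1 + b 2) (h₁ : b 1 ≤ b 0 + b 2) (h₂ : b 2 ≤ b 0 + b 1) :
    (triangleGram b).PosSemidef := by
  refine .of_dotProduct_mulVec_nonneg ?_ fun v ↦ ?_
  · ext i j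
    fin_cases i <;> fin_cases j <;> rfl
  · -- `triangleGram b *ᵥ 1 = 0`, so the form only depends on `v 0 - v 2` and `v 1 - v 2`.
    have key := quadForm_nonneg_of_triangle h₂ h₀ h₁ (v 0 - v 2) (v 1 - v 2)
    simp only [dotProduct, Pi.star_apply, star_trivial, mulVec, triangleGram, of_apply, cons_val',
      cons_val_fin_one, Fin.sum_univ_three, cons_val_zero, cons_val_one, cons_val]
    linarith

end triangleGram

theorem exists_posSemidef_diag_eq_mulVec_eq_zero {α η : Fin 3 → ℝ} (hα : ∀ i, α i ≠ 0)
    (hη : ∀ i, 0 ≤ η i)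
    (h₀ : α 0 * √(η 0) ≤ α 1 * √(η 1) + α 2 * √(η 2))
    (h₁ : α 1 * √(η 1) ≤ α 0 * √(η 0) + α 2 * √(η 2))
    (h₂ : α 2 * √(η 2) ≤ α 0 * √(η 0) + α 1 * √(η 1)) :
    ∃ Z : Matrix (Fin 3) (Fin 3) ℝ, Z.PosSemidef ∧ (∀ i, Z i i = η i) ∧ Z *ᵥ α = 0 := by
  have hD : (diagonal α⁻¹)ᴴ = diagonal α⁻¹ := by simp
  refine ⟨diagonal α⁻¹ * triangleGram (fun i ↦ α i * √(η i)) * diagonal α⁻¹, ?_, fun i ↦ ?_, ?_⟩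
  · simpa [hD] using (triangleGram.posSemidef _ h₀ h₁ h₂).conjTranspose_mul_mul_same
      (diagonal α⁻¹)
  · rw [mul_diagonal, diagonal_mul, triangleGram.apply_self, mul_pow, Real.sq_sqrt (hη i),
      Pi.inv_apply]
    field_simp [hα i]
  · have hDα : diagonal α⁻¹ *ᵥ α = 1 := by
      ext i
      simp [mulVec_diagonal, hα i]
    rw [← mulVec_mulVec, ← mulVec_mulVec, hDα, triangleGram.mulVec_one, mulVec_zero]

theorem sub_diagonal_eq_diagonal_add_vecMulVec (a b c : ℝ) (x : Fin 3 → ℝ) :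
    !![1, a * b, c * a; a * b, 1, b * c; c * a, b * c, 1] - diagonal x =
      diagonal (fun i ↦ 1 - ![a, b, c] i ^ 2 - x i) + vecMulVec ![a, b, c] ![a, b, c] := by
  ext i j
  fin_cases i <;> fin_cases j <;> simp <;> ring

theorem three_state_gamma_pos_triangle_general
    (α₁ α₂ α₃ η₁ η₂ η₃ : ℝ)
    (hα₁ : 0 < α₁) (hα₂ : 0 < α₂) (hα₃ : 0 < α₃)
    (hη₁ : 0 < η₁) (hη₂ : 0 < η₂) (hη₃ : 0 < η₃) (hsum : η₁ + η₂ + η₃ = 1)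
    (htri₁ : α₁ * Real.sqrt η₁ ≤ α₂ * Real.sqrt η₂ + α₃ * Real.sqrt η₃)
    (htri₂ : α₂ * Real.sqrt η₂ ≤ α₁ * Real.sqrt η₁ + α₃ * Real.sqrt η₃)
    (htri₃ : α₃ * Real.sqrt η₃ ≤ α₁ * Real.sqrt η₁ + α₂ * Real.sqrt η₂) :
    IsGreatest {p : ℝ | ∃ x : Fin 3 → ℝ,
        (!![1, α₁ * α₂, α₃ * α₁; α₁ * α₂, 1, α₂ * α₃; α₃ * α₁, α₂ * α₃, 1] -
          Matrix.diagonal x).PosSemidef ∧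
        p = η₁ * x 0 + η₂ * x 1 + η₃ * x 2}
      (1 - (η₁ * α₁ ^ 2 + η₂ * α₂ ^ 2 + η₃ * α₃ ^ 2)) ∧
    ((!![1, α₁ * α₂, α₃ * α₁; α₁ * α₂, 1, α₂ * α₃; α₃ * α₁, α₂ * α₃, 1] -
        Matrix.diagonal ![1 - α₁ ^ 2, 1 - α₂ ^ 2, 1 - α₃ ^ 2]).PosSemidef ∧
      η₁ * (1 - α₁ ^ 2) + η₂ * (1 - α₂ ^ 2) + η₃ * (1 - α₃ ^ 2) =
        1 - (η₁ * α₁ ^ 2 + η₂ * α₂ ^ 2 + η₃ * α₃ ^ 2)) ∧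
    (α₁ ≤ 1 → α₂ ≤ 1 → α₃ ≤ 1 →
      IsGreatest {p : ℝ | ∃ x : Fin 3 → ℝ, (∀ i, 0 ≤ x i) ∧
          (!![1, α₁ * α₂, α₃ * α₁; α₁ * α₂, 1, α₂ * α₃; α₃ * α₁, α₂ * α₃, 1] -
            Matrix.diagonal x).PosSemidef ∧
          p = η₁ * x 0 + η₂ * x 1 + η₃ * x 2}
        (1 - (η₁ * α₁ ^ 2 + η₂ * α₂ ^ 2 + η₃ * α₃ ^ 2))) := by
  obtain ⟨Z, hZ, hZη, hZα⟩ := exists_posSemidef_diag_eq_mulVec_eq_zero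
    (α := ![α₁, α₂, α₃]) (η := ![η₁, η₂, η₃])
    (by simp [Fin.forall_fin_succ, hα₁.ne', hα₂.ne', hα₃.ne'])
    (by simp [Fin.forall_fin_succ, hη₁.le, hη₂.le, hη₃.le]) htri₁ htri₂ htri₃
  have hbound (x : Fin 3 → ℝ)
      (hx : (!![1, α₁ * α₂, α₃ * α₁; α₁ * α₂, 1, α₂ * α₃; α₃ * α₁, α₂ * α₃, 1] -
        diagonal x).PosSemidef) :
      η₁ * x 0 + η₂ * x 1 + η₃ * x 2 ≤ 1 - (η₁ * α₁ ^ 2 + η₂ * α₂ ^ 2 + η₃ * α₃ ^ 2) := by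
    rw [sub_diagonal_eq_diagonal_add_vecMulVec] at hx
    have hdual := hZ.sum_diag_mul_nonneg hZα hx
    simp only [Fin.sum_univ_three, hZη, cons_val_zero, cons_val_one, cons_val] at hdual
    linarith
  have hopt : (!![1, α₁ * α₂, α₃ * α₁; α₁ * α₂, 1, α₂ * α₃; α₃ * α₁, α₂ * α₃, 1] -
      diagonal ![1 - α₁ ^ 2, 1 - α₂ ^ 2, 1 - α₃ ^ 2]).PosSemidef := by
    rw [sub_diagonal_eq_diagonal_add_vecMulVec]
    convert posSemidef_vecMulVec_self_star ![α₁, α₂, α₃] using 1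
    rw [star_trivial, add_eq_right, diagonal_eq_zero]
    ext i
    fin_cases i <;> simp
  have hval : η₁ * (1 - α₁ ^ 2) + η₂ * (1 - α₂ ^ 2) + η₃ * (1 - α₃ ^ 2) =
      1 - (η₁ * α₁ ^ 2 + η₂ * α₂ ^ 2 + η₃ * α₃ ^ 2) := by
    linear_combination hsum
  refine ⟨⟨⟨_, hopt, hval.symm⟩, ?_⟩, ⟨hopt, hval⟩,
    fun h₁ h₂ h₃ ↦ ⟨⟨_, fun i ↦ ?_, hopt, hval.symm⟩, ?_⟩⟩
  · rintro p ⟨x, hx, rfl⟩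
    exact hbound x hx
  · fin_cases i <;> simp [abs_of_pos, *]
  · rintro p ⟨x, -, hx, rfl⟩
    exact hbound x hx

/-- Three pure states with `Γ > 0` under the triangle condition: the maximum of
the relaxed problem is `1 - (η₁α₁² + η₂α₂² + η₃α₃²)`, attained at
`x_i = 1 - α_i²`; if moreover `α_i ≤ 1` for all `i`, this point also solves the
problem with the sign constraints `x_i ≥ 0`. -/
theorem three_state_gamma_pos_triangle
    (α₁ α₂ α₃ η₁ η₂ η₃ : ℝ)
    (hα₁ : 0 < α₁) (hα₂ : 0 < α₂) (hα₃ : 0 < α₃)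
    (hN : (!![1, α₁ * α₂, α₃ * α₁; α₁ * α₂, 1, α₂ * α₃; α₃ * α₁, α₂ * α₃, 1] :
      Matrix (Fin 3) (Fin 3) ℝ).PosDef)
    (hη₁ : 0 < η₁) (hη₂ : 0 < η₂) (hη₃ : 0 < η₃) (hsum : η₁ + η₂ + η₃ = 1)
    (htri₁ : α₁ * Real.sqrt η₁ ≤ α₂ * Real.sqrt η₂ + α₃ * Real.sqrt η₃)
    (htri₂ : α₂ * Real.sqrt η₂ ≤ α₁ * Real.sqrt η₁ + α₃ * Real.sqrt η₃)
    (htri₃ : α₃ * Real.sqrt η₃ ≤ α₁ * Real.sqrt η₁ + α₂ * Real.sqrt η₂) :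
    IsGreatest {p : ℝ | ∃ x : Fin 3 → ℝ,
        (!![1, α₁ * α₂, α₃ * α₁; α₁ * α₂, 1, α₂ * α₃; α₃ * α₁, α₂ * α₃, 1] -
          Matrix.diagonal x).PosSemidef ∧
        p = η₁ * x 0 + η₂ * x 1 + η₃ * x 2}
      (1 - (η₁ * α₁ ^ 2 + η₂ * α₂ ^ 2 + η₃ * α₃ ^ 2)) ∧
    ((!![1, α₁ * α₂, α₃ * α₁; α₁ * α₂, 1, α₂ * α₃; α₃ * α₁, α₂ * α₃, 1] -
        Matrix.diagonal ![1 - α₁ ^ 2, 1 - α₂ ^ 2, 1 - α₃ ^ 2]).PosSemidef ∧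
      η₁ * (1 - α₁ ^ 2) + η₂ * (1 - α₂ ^ 2) + η₃ * (1 - α₃ ^ 2) =
        1 - (η₁ * α₁ ^ 2 + η₂ * α₂ ^ 2 + η₃ * α₃ ^ 2)) ∧
    (α₁ ≤ 1 → α₂ ≤ 1 → α₃ ≤ 1 →
      IsGreatest {p : ℝ | ∃ x : Fin 3 → ℝ, (∀ i, 0 ≤ x i) ∧
          (!![1, α₁ * α₂, α₃ * α₁; α₁ * α₂, 1, α₂ * α₃; α₃ * α₁, α₂ * α₃, 1] -
            Matrix.diagonal x).PosSemidef ∧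
          p = η₁ * x 0 + η₂ * x 1 + η₃ * x 2}
        (1 - (η₁ * α₁ ^ 2 + η₂ * α₂ ^ 2 + η₃ * α₃ ^ 2))) :=
  three_state_gamma_pos_triangle_general α₁ α₂ α₃ η₁ η₂ η₃ hα₁ hα₂ hα₃ hη₁ hη₂ hη₃ hsum htri₁ htri₂
    htri₃
end

section
/- Three states with Γ > 0, triangle condition violated: let α_1, α_2, α_3 > 0 and let N be the 3×3 real symmetric matrix with diagonal entries 1 and off-diagonal entries N₁₂ = α_1α_2, N₂₃ = α_2α_3, N₃₁ = α_3α_1; assume N is positive definite, and let η_1, η_2, η_3 > 0 with η_1 + η_2 + η_3 = 1. If α_1√η_1 ≥ α_2√η_2, α_1√η_1 ≥ α_3√η_3, and α_1√η_1 ≥ α_2√η_2 + α_3√η_3, then the maximum of Σ_i η_i x_i over x ∈ ℝ³ with N − diag(x) positive semidefinite (no sign constraint) equals 1 − 2√(η_1η_2) α_1α_2 + 2√(η_2η_3) α_2α_3 − 2√(η_3η_1) α_3α_1, and it is attained at x₁ = 1 − α_1(α_2√η_2 + α_3√η_3)/√η_1, x₂ = 1 − α_2(α_1√η_1 − α_3√η_3)/√η_2,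 x₃ = 1 − α_3(α_1√η_1 − α_2√η_2)/√η_3. -/
/-!
Weak duality: if `N - diag x ⪰ 0`, testing it on `v = (√η₁, -√η₂, -√η₃)` gives
`∑ ηᵢ xᵢ ≤ vᵀ N v`, and `vᵀ N v` is the claimed value. The optimal point is the one with
`(N - diag x) v = 0`, so there the bound is attained. In the coordinates `zᵢ = wᵢ / vᵢ` its
quadratic form `w ↦ wᵀ (N - diag x) w` is `∑ cᵢⱼ (zᵢ - zⱼ)²` over the edges of a triangle, with
`cᵢⱼ = -Nᵢⱼ vᵢ vⱼ`; here `c₁₂, c₁₃ > 0 > c₂₃` and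
`c₁₂c₁₃ + c₁₃c₂₃ + c₂₃c₁₂ = α₁α₂α₃√(η₁η₂η₃) (α₁√η₁ - α₂√η₂ - α₃√η₃) ≥ 0`,
which is exactly what makes such a form positive semidefinite.
-/

open Matrix

theorem dotProduct_sub_diagonal_mulVec {n : Type*} [Fintype n] [DecidableEq n]
    (N : Matrix n n ℝ) (x v : n → ℝ) :
    v ⬝ᵥ (N - diagonal x) *ᵥ v = v ⬝ᵥ N *ᵥ v - ∑ i, v i ^ 2 * x i := by
  rw [sub_mulVec, dotProduct_sub]
  congr 1
  simp only [dotProduct, mulVec_diagonal]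
  exact Finset.sum_congr rfl fun i _ => by ring

theorem sum_sq_mul_le_of_posSemidef_sub_diagonal {n : Type*} [Fintype n] [DecidableEq n]
    {N : Matrix n n ℝ} {x : n → ℝ} (h : (N - diagonal x).PosSemidef) (v : n → ℝ) :
    ∑ i, v i ^ 2 * x i ≤ v ⬝ᵥ N *ᵥ v := by
  have := h.dotProduct_mulVec_nonneg v
  rw [star_trivial, dotProduct_sub_diagonal_mulVec] at this
  linarith

theorem triangle_quadratic_nonneg {a b c : ℝ} (hab : 0 < a + b) (h : 0 ≤ a * b + b * c + c * a)
    (p q : ℝ) : 0 ≤ a * p ^ 2 + b * q ^ 2 + c * (p - q) ^ 2 := by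
  have key : (a + b) * (a * p ^ 2 + b * q ^ 2 + c * (p - q) ^ 2) =
      (a * p + b * q) ^ 2 + (a * b + b * c + c * a) * (p - q) ^ 2 := by ring
  refine nonneg_of_mul_nonneg_right (key ▸ ?_) hab
  positivity

theorem posSemidef_fin_three_of_mulVec_eq_zero {M : Matrix (Fin 3) (Fin 3) ℝ}
    (hM : M.IsHermitian) {u : Fin 3 → ℝ} (hu : ∀ i, u i ≠ 0) (hker : M *ᵥ u = 0)
    (hpos : M 0 1 * u 0 * u 1 + M 0 2 * u 0 * u 2 < 0)
    (hdisc : 0 ≤ M 0 1 * M 0 2 * u 0 ^ 2 * u 1 * u 2 + M 0 2 * M 1 2 * u 0 * u 1 * u 2 ^ 2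
      + M 1 2 * M 0 1 * u 0 * u 1 ^ 2 * u 2) :
    M.PosSemidef := by
  refine PosSemidef.of_dotProduct_mulVec_nonneg hM fun v => ?_
  set z : Fin 3 → ℝ := fun i => v i / u i
  have hv : v = fun i => u i * z i := funext fun i => (mul_div_cancel₀ _ (hu i)).symm
  have h10 : M 1 0 = M 0 1 := hM.apply 0 1
  have h20 : M 2 0 = M 0 2 := hM.apply 0 2
  have h21 : M 2 1 = M 1 2 := hM.apply 1 2
  have hk i : (M *ᵥ u) i = 0 := by rw [hker]; rfl
  have hk0 := hk 0; have hk1 := hk 1; have hk2 := hk 2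
  simp only [mulVec, dotProduct, Fin.sum_univ_three, h10, h20, h21] at hk0 hk1 hk2
  have hform : star v ⬝ᵥ M *ᵥ v =
      -(M 0 1 * u 0 * u 1) * (z 0 - z 1) ^ 2 + -(M 0 2 * u 0 * u 2) * (z 0 - z 2) ^ 2
        + -(M 1 2 * u 1 * u 2) * ((z 0 - z 1) - (z 0 - z 2)) ^ 2 := by
    rw [star_trivial, hv]
    simp only [mulVec, dotProduct, Fin.sum_univ_three, h10, h20, h21]
    linear_combination u 0 * z 0 ^ 2 * hk0 + u 1 * z 1 ^ 2 * hk1 + u 2 * z 2 ^ 2 * hk2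
  rw [hform]
  exact triangle_quadratic_nonneg (by linarith) (by linarith) _ _

def gramMatrix (α₁ α₂ α₃ : ℝ) : Matrix (Fin 3) (Fin 3) ℝ :=
  !![1, α₁ * α₂, α₃ * α₁; α₁ * α₂, 1, α₂ * α₃; α₃ * α₁, α₂ * α₃, 1]

noncomputable def optimalPoint (α₁ α₂ α₃ s₁ s₂ s₃ : ℝ) : Fin 3 → ℝ :=
  ![1 - α₁ * (α₂ * s₂ + α₃ * s₃) / s₁,
    1 - α₂ * (α₁ * s₁ - α₃ * s₃) / s₂,
    1 - α₃ * (α₁ * s₁ - α₂ * s₂) / s₃]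

section GramMatrix

variable (α₁ α₂ α₃ s₁ s₂ s₃ : ℝ)

theorem sum_sq_mul_fin_three (x : Fin 3 → ℝ) :
    ∑ i, ![s₁, -s₂, -s₃] i ^ 2 * x i = s₁ ^ 2 * x 0 + s₂ ^ 2 * x 1 + s₃ ^ 2 * x 2 := by
  simp [Fin.sum_univ_three]

theorem dotProduct_gramMatrix_mulVec :
    ![s₁, -s₂, -s₃] ⬝ᵥ gramMatrix α₁ α₂ α₃ *ᵥ ![s₁, -s₂, -s₃] =
      s₁ ^ 2 + s₂ ^ 2 + s₃ ^ 2 - 2 * (s₁ * s₂) * (α₁ * α₂) + 2 * (s₂ * s₃) * (α₂ * α₃)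
        - 2 * (s₃ * s₁) * (α₃ * α₁) := by
  simp [gramMatrix, dotProduct, mulVec, Fin.sum_univ_three]
  ring

theorem gramMatrix_sub_diagonal_optimalPoint_mulVec_eq_zero
    (h₁ : s₁ ≠ 0) (h₂ : s₂ ≠ 0) (h₃ : s₃ ≠ 0) :
    (gramMatrix α₁ α₂ α₃ - diagonal (optimalPoint α₁ α₂ α₃ s₁ s₂ s₃)) *ᵥ ![s₁, -s₂, -s₃] = 0 := by
  ext i
  fin_cases i <;> simp [gramMatrix, optimalPoint, mulVec, dotProduct, Fin.sum_univ_three] <;>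
    field_simp <;> ring

theorem gramMatrix_sub_diagonal (x : Fin 3 → ℝ) :
    gramMatrix α₁ α₂ α₃ - diagonal x =
      !![1 - x 0, α₁ * α₂, α₃ * α₁; α₁ * α₂, 1 - x 1, α₂ * α₃; α₃ * α₁, α₂ * α₃, 1 - x 2] := by
  ext i j
  fin_cases i <;> fin_cases j <;> simp [gramMatrix]

theorem posSemidef_gramMatrix_sub_diagonal_optimalPoint (hα₁ : 0 < α₁) (hα₂ : 0 < α₂)
    (hα₃ : 0 < α₃) (h₁ : 0 < s₁) (h₂ : 0 < s₂) (h₃ : 0 < s₃)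
    (hviol : α₂ * s₂ + α₃ * s₃ ≤ α₁ * s₁) :
    (gramMatrix α₁ α₂ α₃ - diagonal (optimalPoint α₁ α₂ α₃ s₁ s₂ s₃)).PosSemidef := by
  have hker := gramMatrix_sub_diagonal_optimalPoint_mulVec_eq_zero α₁ α₂ α₃ s₁ s₂ s₃
    h₁.ne' h₂.ne' h₃.ne'
  rw [gramMatrix_sub_diagonal] at hker ⊢
  refine posSemidef_fin_three_of_mulVec_eq_zero ?_ (u := ![s₁, -s₂, -s₃]) ?_ hker ?_ ?_
  · ext i j
    fin_cases i <;> fin_cases j <;> rfl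
  · intro i
    fin_cases i <;> simp [h₁.ne', h₂.ne', h₃.ne']
  · show α₁ * α₂ * s₁ * -s₂ + α₃ * α₁ * s₁ * -s₃ < 0
    nlinarith [mul_pos (mul_pos hα₁ h₁) (mul_pos hα₂ h₂),
      mul_pos (mul_pos hα₁ h₁) (mul_pos hα₃ h₃)]
  · show 0 ≤ α₁ * α₂ * (α₃ * α₁) * s₁ ^ 2 * -s₂ * -s₃
      + α₃ * α₁ * (α₂ * α₃) * s₁ * -s₂ * (-s₃) ^ 2 + α₂ * α₃ * (α₁ * α₂) * s₁ * (-s₂) ^ 2 * -s₃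
    have : 0 ≤ α₁ * α₂ * α₃ * s₁ * s₂ * s₃ * (α₁ * s₁ - α₂ * s₂ - α₃ * s₃) :=
      mul_nonneg (by positivity) (by linarith)
    linear_combination this

end GramMatrix

theorem three_state_gamma_pos_no_triangle_general
    (α₁ α₂ α₃ η₁ η₂ η₃ : ℝ)
    (hα₁ : 0 < α₁) (hα₂ : 0 < α₂) (hα₃ : 0 < α₃)
    (hη₁ : 0 < η₁) (hη₂ : 0 < η₂) (hη₃ : 0 < η₃) (hsum : η₁ + η₂ + η₃ = 1)
    (hviol : α₂ * Real.sqrt η₂ + α₃ * Real.sqrt η₃ ≤ α₁ * Real.sqrt η₁) :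
    IsGreatest {p : ℝ | ∃ x : Fin 3 → ℝ,
        (!![1, α₁ * α₂, α₃ * α₁; α₁ * α₂, 1, α₂ * α₃; α₃ * α₁, α₂ * α₃, 1] -
          Matrix.diagonal x).PosSemidef ∧
        p = η₁ * x 0 + η₂ * x 1 + η₃ * x 2}
      (1 - 2 * Real.sqrt (η₁ * η₂) * (α₁ * α₂) +
        2 * Real.sqrt (η₂ * η₃) * (α₂ * α₃) -
        2 * Real.sqrt (η₃ * η₁) * (α₃ * α₁)) ∧
    ((!![1, α₁ * α₂, α₃ * α₁; α₁ * α₂, 1, α₂ * α₃; α₃ * α₁, α₂ * α₃, 1] -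
        Matrix.diagonal
          ![1 - α₁ * (α₂ * Real.sqrt η₂ + α₃ * Real.sqrt η₃) / Real.sqrt η₁,
            1 - α₂ * (α₁ * Real.sqrt η₁ - α₃ * Real.sqrt η₃) / Real.sqrt η₂,
            1 - α₃ * (α₁ * Real.sqrt η₁ - α₂ * Real.sqrt η₂) / Real.sqrt η₃]).PosSemidef ∧
      η₁ * (1 - α₁ * (α₂ * Real.sqrt η₂ + α₃ * Real.sqrt η₃) / Real.sqrt η₁) +
        η₂ * (1 - α₂ * (α₁ * Real.sqrt η₁ - α₃ * Real.sqrt η₃) / Real.sqrt η₂) +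
        η₃ * (1 - α₃ * (α₁ * Real.sqrt η₁ - α₂ * Real.sqrt η₂) / Real.sqrt η₃) =
      1 - 2 * Real.sqrt (η₁ * η₂) * (α₁ * α₂) +
        2 * Real.sqrt (η₂ * η₃) * (α₂ * α₃) -
        2 * Real.sqrt (η₃ * η₁) * (α₃ * α₁)) := by
  obtain ⟨s₁, h₁, rfl⟩ : ∃ s, 0 < s ∧ s ^ 2 = η₁ := ⟨_, Real.sqrt_pos.2 hη₁, Real.sq_sqrt hη₁.le⟩
  obtain ⟨s₂, h₂, rfl⟩ : ∃ s, 0 < s ∧ s ^ 2 = η₂ := ⟨_, Real.sqrt_pos.2 hη₂, Real.sq_sqrt hη₂.le⟩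
  obtain ⟨s₃, h₃, rfl⟩ : ∃ s, 0 < s ∧ s ^ 2 = η₃ := ⟨_, Real.sqrt_pos.2 hη₃, Real.sq_sqrt hη₃.le⟩
  simp only [Real.sqrt_mul (sq_nonneg _), Real.sqrt_sq h₁.le, Real.sqrt_sq h₂.le,
    Real.sqrt_sq h₃.le] at hviol ⊢
  have hpsd := posSemidef_gramMatrix_sub_diagonal_optimalPoint α₁ α₂ α₃ s₁ s₂ s₃ hα₁ hα₂ hα₃
    h₁ h₂ h₃ hviol
  have hval := dotProduct_sub_diagonal_mulVec (gramMatrix α₁ α₂ α₃)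
    (optimalPoint α₁ α₂ α₃ s₁ s₂ s₃) ![s₁, -s₂, -s₃]
  rw [gramMatrix_sub_diagonal_optimalPoint_mulVec_eq_zero _ _ _ _ _ _ h₁.ne' h₂.ne' h₃.ne',
    dotProduct_zero, dotProduct_gramMatrix_mulVec, sum_sq_mul_fin_three, hsum, eq_comm,
    sub_eq_zero] at hval
  refine ⟨⟨⟨_, hpsd, hval⟩, ?_⟩, hpsd, hval.symm⟩
  rintro p ⟨x, hx, rfl⟩
  have hle := sum_sq_mul_le_of_posSemidef_sub_diagonal (N := gramMatrix α₁ α₂ α₃) hx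
    ![s₁, -s₂, -s₃]
  rwa [dotProduct_gramMatrix_mulVec, sum_sq_mul_fin_three, hsum] at hle

/-- Three pure states with `Γ > 0`, triangle condition violated
(`α₁√η₁` dominates): the maximum of the relaxed problem is
`1 - 2√(η₁η₂)α₁α₂ + 2√(η₂η₃)α₂α₃ - 2√(η₃η₁)α₃α₁`, attained at the indicated
point. -/
theorem three_state_gamma_pos_no_triangle
    (α₁ α₂ α₃ η₁ η₂ η₃ : ℝ)
    (hα₁ : 0 < α₁) (hα₂ : 0 < α₂) (hα₃ : 0 < α₃)
    (hN : (!![1, α₁ * α₂, α₃ * α₁; α₁ * α₂, 1, α₂ * α₃; α₃ * α₁, α₂ * α₃, 1] :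
      Matrix (Fin 3) (Fin 3) ℝ).PosDef)
    (hη₁ : 0 < η₁) (hη₂ : 0 < η₂) (hη₃ : 0 < η₃) (hsum : η₁ + η₂ + η₃ = 1)
    (hdom₂ : α₂ * Real.sqrt η₂ ≤ α₁ * Real.sqrt η₁)
    (hdom₃ : α₃ * Real.sqrt η₃ ≤ α₁ * Real.sqrt η₁)
    (hviol : α₂ * Real.sqrt η₂ + α₃ * Real.sqrt η₃ ≤ α₁ * Real.sqrt η₁) :
    IsGreatest {p : ℝ | ∃ x : Fin 3 → ℝ,
        (!![1, α₁ * α₂, α₃ * α₁; α₁ * α₂, 1, α₂ * α₃; α₃ * α₁, α₂ * α₃, 1] -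
          Matrix.diagonal x).PosSemidef ∧
        p = η₁ * x 0 + η₂ * x 1 + η₃ * x 2}
      (1 - 2 * Real.sqrt (η₁ * η₂) * (α₁ * α₂) +
        2 * Real.sqrt (η₂ * η₃) * (α₂ * α₃) -
        2 * Real.sqrt (η₃ * η₁) * (α₃ * α₁)) ∧
    ((!![1, α₁ * α₂, α₃ * α₁; α₁ * α₂, 1, α₂ * α₃; α₃ * α₁, α₂ * α₃, 1] -
        Matrix.diagonal
          ![1 - α₁ * (α₂ * Real.sqrt η₂ + α₃ * Real.sqrt η₃) / Real.sqrt η₁,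
            1 - α₂ * (α₁ * Real.sqrt η₁ - α₃ * Real.sqrt η₃) / Real.sqrt η₂,
            1 - α₃ * (α₁ * Real.sqrt η₁ - α₂ * Real.sqrt η₂) / Real.sqrt η₃]).PosSemidef ∧
      η₁ * (1 - α₁ * (α₂ * Real.sqrt η₂ + α₃ * Real.sqrt η₃) / Real.sqrt η₁) +
        η₂ * (1 - α₂ * (α₁ * Real.sqrt η₁ - α₃ * Real.sqrt η₃) / Real.sqrt η₂) +
        η₃ * (1 - α₃ * (α₁ * Real.sqrt η₁ - α₂ * Real.sqrt η₂) / Real.sqrt η₃) =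
      1 - 2 * Real.sqrt (η₁ * η₂) * (α₁ * α₂) +
        2 * Real.sqrt (η₂ * η₃) * (α₂ * α₃) -
        2 * Real.sqrt (η₃ * η₁) * (α₃ * α₁)) :=
  three_state_gamma_pos_no_triangle_general α₁ α₂ α₃ η₁ η₂ η₃ hα₁ hα₂ hα₃ hη₁ hη₂ hη₃ hsum hviol
end

section
/- Three states with complex inner products and equal weighted moduli: let α_1, α_2, α_3 > 0, let 0 ≤ θ < 2π/3, and let N be the 3×3 complex Hermitian matrix with diagonal entries 1 and N₁₂ = α_1α_2 e^{iθ}, N₂₃ = α_2α_3 e^{iθ}, N₃₁ = α_3α_1 e^{iθ} (with N₂₁, N₃₂, N₁₃ the complex conjugates); assume N is positive definite and let η_1, η_2, η_3 > 0 with η_1 + η_2 + η_3 = 1 satisfy α_1√η_1 = α_2√η_2 = α_3√η_3. Then the maximum of Σ_i η_i x_i over x ∈ ℝ³ with N − diag(x) positive semidefinite (no sign constraint) equals 1 + 2cos(θ + 2π/3)·(η_1α_1² + η_2α_2² + η_3α_3²), and it is attained at x_i = 1 + 2α_i² cos(θ + 2π/3) (i = 1,2,3). -/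
set_option maxHeartbeats 2000000


open ComplexOrder

/-- Three states with complex inner products `⟨φ_i|φ_j⟩ = α_iα_j e^{iθ}` and
equal weighted moduli `α₁√η₁ = α₂√η₂ = α₃√η₃`: the maximum of the relaxed
problem is `1 + 2cos(θ + 2π/3)(η₁α₁² + η₂α₂² + η₃α₃²)`, attained at
`x_i = 1 + 2α_i² cos(θ + 2π/3)`. -/
theorem three_state_complex_equal_moduli
    (α₁ α₂ α₃ η₁ η₂ η₃ θ : ℝ)
    (hα₁ : 0 < α₁) (hα₂ : 0 < α₂) (hα₃ : 0 < α₃)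
    (hθ0 : 0 ≤ θ) (hθ1 : θ < 2 * Real.pi / 3)
    (hN : (!![1, (α₁ * α₂ : ℂ) * Complex.exp (θ * Complex.I),
              (α₃ * α₁ : ℂ) * star (Complex.exp (θ * Complex.I));
            (α₁ * α₂ : ℂ) * star (Complex.exp (θ * Complex.I)), 1,
              (α₂ * α₃ : ℂ) * Complex.exp (θ * Complex.I);
            (α₃ * α₁ : ℂ) * Complex.exp (θ * Complex.I),
              (α₂ * α₃ : ℂ) * star (Complex.exp (θ * Complex.I)), 1] :
      Matrix (Fin 3) (Fin 3) ℂ).PosDef)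
    (hη₁ : 0 < η₁) (hη₂ : 0 < η₂) (hη₃ : 0 < η₃) (hsum : η₁ + η₂ + η₃ = 1)
    (heq₁₂ : α₁ * Real.sqrt η₁ = α₂ * Real.sqrt η₂)
    (heq₂₃ : α₂ * Real.sqrt η₂ = α₃ * Real.sqrt η₃) :
    IsGreatest {p : ℝ | ∃ x : Fin 3 → ℝ,
        ((!![1, (α₁ * α₂ : ℂ) * Complex.exp (θ * Complex.I),
              (α₃ * α₁ : ℂ) * star (Complex.exp (θ * Complex.I));
            (α₁ * α₂ : ℂ) * star (Complex.exp (θ * Complex.I)), 1,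
              (α₂ * α₃ : ℂ) * Complex.exp (θ * Complex.I);
            (α₃ * α₁ : ℂ) * Complex.exp (θ * Complex.I),
              (α₂ * α₃ : ℂ) * star (Complex.exp (θ * Complex.I)), 1] :
          Matrix (Fin 3) (Fin 3) ℂ) -
          Matrix.diagonal (fun i => (x i : ℂ))).PosSemidef ∧
        p = η₁ * x 0 + η₂ * x 1 + η₃ * x 2}
      (1 + 2 * Real.cos (θ + 2 * Real.pi / 3) *
        (η₁ * α₁ ^ 2 + η₂ * α₂ ^ 2 + η₃ * α₃ ^ 2)) ∧
    (((!![1, (α₁ * α₂ : ℂ) * Complex.exp (θ * Complex.I),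
              (α₃ * α₁ : ℂ) * star (Complex.exp (θ * Complex.I));
            (α₁ * α₂ : ℂ) * star (Complex.exp (θ * Complex.I)), 1,
              (α₂ * α₃ : ℂ) * Complex.exp (θ * Complex.I);
            (α₃ * α₁ : ℂ) * Complex.exp (θ * Complex.I),
              (α₂ * α₃ : ℂ) * star (Complex.exp (θ * Complex.I)), 1] :
          Matrix (Fin 3) (Fin 3) ℂ) -
        Matrix.diagonal (fun i =>
          ((![1 + 2 * α₁ ^ 2 * Real.cos (θ + 2 * Real.pi / 3),
              1 + 2 * α₂ ^ 2 * Real.cos (θ + 2 * Real.pi / 3),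
              1 + 2 * α₃ ^ 2 * Real.cos (θ + 2 * Real.pi / 3)] i : ℝ) : ℂ))).PosSemidef ∧
      η₁ * (1 + 2 * α₁ ^ 2 * Real.cos (θ + 2 * Real.pi / 3)) +
        η₂ * (1 + 2 * α₂ ^ 2 * Real.cos (θ + 2 * Real.pi / 3)) +
        η₃ * (1 + 2 * α₃ ^ 2 * Real.cos (θ + 2 * Real.pi / 3)) =
      1 + 2 * Real.cos (θ + 2 * Real.pi / 3) *
        (η₁ * α₁ ^ 2 + η₂ * α₂ ^ 2 + η₃ * α₃ ^ 2)) := by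
  clear hN
  set C := Real.cos θ with hCdef
  set S := Real.sin θ with hSdef
  set s3 := Real.sqrt 3 with hs3def
  set e₁ := Real.sqrt η₁ with he₁def
  set e₂ := Real.sqrt η₂ with he₂def
  set e₃ := Real.sqrt η₃ with he₃def
  have hs3 : s3 ^ 2 = 3 := Real.sq_sqrt (by norm_num)
  have hs33 : s3 ^ 3 = 3 * s3 := by rw [pow_succ, hs3]
  have hs3nn : 0 ≤ s3 := Real.sqrt_nonneg 3
  have he₁ : e₁ ^ 2 = η₁ := Real.sq_sqrt hη₁.le
  have he₂ : e₂ ^ 2 = η₂ := Real.sq_sqrt hη₂.le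
  have he₃ : e₃ ^ 2 = η₃ := Real.sq_sqrt hη₃.le
  have hpi := Real.pi_pos
  have hS : 0 ≤ S := Real.sin_nonneg_of_nonneg_of_le_pi hθ0 (by linarith)
  have hc : Real.cos (θ + 2 * Real.pi / 3) = -(1/2)*C - (s3/2)*S := by
    have h23 : 2 * Real.pi / 3 = Real.pi - Real.pi/3 := by ring
    rw [Real.cos_add, h23, Real.cos_pi_sub, Real.sin_pi_sub,
      Real.cos_pi_div_three, Real.sin_pi_div_three]
    ring
  have he : Complex.exp (θ * Complex.I) = (C:ℂ) + (S:ℂ) * Complex.I := by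
    rw [Complex.exp_mul_I]
    simp [hCdef, hSdef]
  -- the attained point is feasible
  have hpsd_att : ((!![1, (α₁ * α₂ : ℂ) * Complex.exp (θ * Complex.I),
              (α₃ * α₁ : ℂ) * star (Complex.exp (θ * Complex.I));
            (α₁ * α₂ : ℂ) * star (Complex.exp (θ * Complex.I)), 1,
              (α₂ * α₃ : ℂ) * Complex.exp (θ * Complex.I);
            (α₃ * α₁ : ℂ) * Complex.exp (θ * Complex.I),
              (α₂ * α₃ : ℂ) * star (Complex.exp (θ * Complex.I)), 1] :
          Matrix (Fin 3) (Fin 3) ℂ) -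
        Matrix.diagonal (fun i =>
          ((![1 + 2 * α₁ ^ 2 * Real.cos (θ + 2 * Real.pi / 3),
              1 + 2 * α₂ ^ 2 * Real.cos (θ + 2 * Real.pi / 3),
              1 + 2 * α₃ ^ 2 * Real.cos (θ + 2 * Real.pi / 3)] i : ℝ) : ℂ))).PosSemidef := by
    have hl0 : 0 ≤ (3*C + s3*S)/3 := by
      have h0 : 0 ≤ Real.sin (θ + Real.pi/3) :=
        Real.sin_nonneg_of_nonneg_of_le_pi (by positivity) (by linarith)
      have h1 : 3*C + s3*S = 2*s3*Real.sin (θ + Real.pi/3) := by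
        rw [Real.sin_add, Real.cos_pi_div_three, Real.sin_pi_div_three]
        linear_combination (-C) * hs3
      nlinarith
    have hl2 : 0 ≤ s3*S/6 := by positivity
    have hD : (Matrix.diagonal ![(((3*C + s3*S)/3 : ℝ) : ℂ), ((s3*S/6 : ℝ) : ℂ), 0]).PosSemidef := by
      refine Matrix.posSemidef_diagonal_iff.mpr ?_
      intro i
      fin_cases i
      · simpa using Complex.zero_le_real.mpr hl0
      · simpa using Complex.zero_le_real.mpr hl2
      · simp
    have hpsd := hD.conjTranspose_mul_mul_same
      (B := !![(α₁:ℂ), (α₂:ℂ), (α₃:ℂ);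
               (α₁:ℂ) * ((2:ℝ):ℂ), (α₂:ℂ) * (((-1:ℝ):ℂ) + ((s3:ℝ):ℂ) * Complex.I),
                 (α₃:ℂ) * (((-1:ℝ):ℂ) - ((s3:ℝ):ℂ) * Complex.I);
               0, 0, 0])
    have key : (!![1, (α₁ * α₂ : ℂ) * Complex.exp (θ * Complex.I),
                (α₃ * α₁ : ℂ) * star (Complex.exp (θ * Complex.I));
              (α₁ * α₂ : ℂ) * star (Complex.exp (θ * Complex.I)), 1,
                (α₂ * α₃ : ℂ) * Complex.exp (θ * Complex.I);
              (α₃ * α₁ : ℂ) * Complex.exp (θ * Complex.I),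
                (α₂ * α₃ : ℂ) * star (Complex.exp (θ * Complex.I)), 1] :
            Matrix (Fin 3) (Fin 3) ℂ) -
          Matrix.diagonal (fun i =>
            ((![1 + 2 * α₁ ^ 2 * Real.cos (θ + 2 * Real.pi / 3),
                1 + 2 * α₂ ^ 2 * Real.cos (θ + 2 * Real.pi / 3),
                1 + 2 * α₃ ^ 2 * Real.cos (θ + 2 * Real.pi / 3)] i : ℝ) : ℂ))
        = (!![(α₁:ℂ), (α₂:ℂ), (α₃:ℂ);
               (α₁:ℂ) * ((2:ℝ):ℂ), (α₂:ℂ) * (((-1:ℝ):ℂ) + ((s3:ℝ):ℂ) * Complex.I),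
                 (α₃:ℂ) * (((-1:ℝ):ℂ) - ((s3:ℝ):ℂ) * Complex.I);
               0, 0, 0] : Matrix (Fin 3) (Fin 3) ℂ).conjTranspose *
          Matrix.diagonal ![(((3*C + s3*S)/3 : ℝ) : ℂ), ((s3*S/6 : ℝ) : ℂ), 0] *
          !![(α₁:ℂ), (α₂:ℂ), (α₃:ℂ);
               (α₁:ℂ) * ((2:ℝ):ℂ), (α₂:ℂ) * (((-1:ℝ):ℂ) + ((s3:ℝ):ℂ) * Complex.I),
                 (α₃:ℂ) * (((-1:ℝ):ℂ) - ((s3:ℝ):ℂ) * Complex.I);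
               0, 0, 0] := by
      ext i j
      rw [he, hc]
      fin_cases i <;> fin_cases j <;>
      · simp [Matrix.mul_apply, Fin.sum_univ_three, Matrix.conjTranspose_apply,
          Matrix.diagonal, Complex.ext_iff, Complex.mul_re, Complex.mul_im,
          map_add, map_sub, _root_.map_mul, Complex.conj_ofReal, Complex.conj_I,
          ← Complex.ofReal_pow]
        all_goals try constructor
        all_goals try (ring_nf; simp only [hs3, hs33]; ring_nf)
        all_goals try ring
    rw [key]
    exact hpsd
  refine ⟨⟨⟨![1 + 2 * α₁ ^ 2 * Real.cos (θ + 2 * Real.pi / 3),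
              1 + 2 * α₂ ^ 2 * Real.cos (θ + 2 * Real.pi / 3),
              1 + 2 * α₃ ^ 2 * Real.cos (θ + 2 * Real.pi / 3)], hpsd_att, ?_⟩, ?_⟩,
          hpsd_att, by linear_combination hsum⟩
  · simp only [Matrix.cons_val_zero, Matrix.cons_val_one, Matrix.head_cons,
      Matrix.cons_val_two, Matrix.tail_cons]
    linear_combination (-1 : ℝ) * hsum
  · rintro p ⟨x, hx, rfl⟩
    have hre := hx.re_dotProduct_nonneg
      ![((e₁:ℝ):ℂ) * ((2:ℝ):ℂ), ((e₂:ℝ):ℂ) * (((-1:ℝ):ℂ) + ((s3:ℝ):ℂ) * Complex.I),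
        ((e₃:ℝ):ℂ) * (((-1:ℝ):ℂ) - ((s3:ℝ):ℂ) * Complex.I)]
    rw [he] at hre
    simp [dotProduct, Matrix.mulVec, Fin.sum_univ_three, Matrix.sub_apply,
      Matrix.diagonal, Complex.ext_iff, Complex.mul_re, Complex.mul_im,
      map_add, map_sub, _root_.map_mul, Complex.conj_ofReal, Complex.conj_I] at hre
    ring_nf at hre
    simp only [hs3, he₁, he₂, he₃] at hre
    have heq13 : α₁ * e₁ = α₃ * e₃ := heq₁₂.trans heq₂₃
    have h12 : α₁*α₂*(e₁*e₂) = η₁*α₁^2 := by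
      linear_combination (-(α₁*e₁))*heq₁₂ + α₁^2*he₁
    have h23 : α₂*α₃*(e₂*e₃) = η₂*α₂^2 := by
      linear_combination (-(α₂*e₂))*heq₂₃ + α₂^2*he₂
    have h31 : α₁*α₃*(e₁*e₃) = η₃*α₃^2 := by
      linear_combination (α₃*e₃)*heq13 + α₃^2*he₃
    have h12C : α₁*α₂*(e₁*e₂)*C = η₁*α₁^2*C := by rw [h12]
    have h23C : α₂*α₃*(e₂*e₃)*C = η₂*α₂^2*C := by rw [h23]
    have h31C : α₁*α₃*(e₁*e₃)*C = η₃*α₃^2*C := by rw [h31]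
    have h12S : α₁*α₂*(e₁*e₂)*(S*s3) = η₁*α₁^2*(S*s3) := by rw [h12]
    have h23S : α₂*α₃*(e₂*e₃)*(S*s3) = η₂*α₂^2*(S*s3) := by rw [h23]
    have h31S : α₁*α₃*(e₁*e₃)*(S*s3) = η₃*α₃^2*(S*s3) := by rw [h31]
    rw [hc]
    linarith [hre, h12C, h23C, h31C, h12S, h23S, h31S]
end

section
/- Symmetric three states: let 0 < γ ≤ 1 and 0 ≤ θ < 2π/3, and let N be the 3×3 complex Hermitian matrix with diagonal entries 1 and N₁₂ = N₂₃ = N₃₁ = γ e^{iθ} (the other off-diagonal entries being the complex conjugates); assume N is positive definite, and take equal occurrence probabilities η_1 = η_2 = η_3 = 1/3. Then the maximum of (1/3)(x_1 + x_2 + x_3) over x ∈ ℝ³ with x_i ≥ 0 for all i and N − diag(x) positive semidefinite equals 1 + 2γ cos(θ + 2π/3), and it is attained at x_1 = x_2 = x_3 = 1 + 2γ cos(θ + 2π/3). -/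
/-!
The Gram matrix `N` of the three states is circulant, so it is diagonalised by the discrete
Fourier vectors `(1, ζ, ζ²)`, `ζ³ = 1`, with eigenvalues `1 + 2 Re (γ e^{iθ} ζ)`; for
`ζ = e^{2πi/3}` this is `m = 1 + 2γ cos (θ + 2π/3)`, the smallest of the three when
`0 ≤ θ ≤ 2π/3`. Testing `N - diag x ⪰ 0` against the unimodular eigenvector for `m` gives
`x₁ + x₂ + x₃ ≤ 3m`, while `N - m I = F diag (λₖ - m) F* / 3`, with `F` the Fourier matrix,
is positive semidefinite.
-/

open ComplexOrder Matrix ComplexConjugate Real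

lemma conj_eq_sq_of_pow_three_eq_one {ζ : ℂ} (h : ζ ^ 3 = 1) : conj ζ = ζ ^ 2 := by
  have hnorm : conj ζ * ζ = 1 := by
    rw [Complex.conj_mul', Complex.norm_eq_one_of_pow_eq_one h (by norm_num)]
    norm_num
  linear_combination ζ ^ 2 * hnorm - conj ζ * h

lemma sum_le_re_dotProduct_of_posSemidef_sub_diagonal {n : Type*} [Fintype n] [DecidableEq n]
    {M : Matrix n n ℂ} {x : n → ℝ} (h : (M - diagonal fun i => (x i : ℂ)).PosSemidef)
    {v : n → ℂ} (hv : ∀ i, ‖v i‖ = 1) :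
    ∑ i, x i ≤ (star v ⬝ᵥ M *ᵥ v).re := by
  have hdiag : star v ⬝ᵥ (diagonal fun i => (x i : ℂ)) *ᵥ v = ∑ i, (x i : ℂ) := by
    simp only [dotProduct, mulVec_diagonal, Pi.star_apply]
    refine Finset.sum_congr rfl fun i _ => ?_
    rw [mul_left_comm, RCLike.star_def, Complex.conj_mul', hv i]
    simp
  have := h.dotProduct_mulVec_nonneg v
  rw [sub_mulVec, dotProduct_sub, hdiag, sub_nonneg] at this
  simpa using (Complex.le_def.mp this).1

lemma cos_add_two_pi_div_three_le_cos {θ : ℝ} (h0 : -(π / 3) ≤ θ) (h1 : θ ≤ 2 * π / 3) :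
    cos (θ + 2 * π / 3) ≤ cos θ := by
  have hsin : 0 ≤ sin (θ + π / 3) := sin_nonneg_of_nonneg_of_le_pi (by linarith) (by linarith)
  have := cos_sub_cos θ (θ + 2 * π / 3)
  rw [show (θ + (θ + 2 * π / 3)) / 2 = θ + π / 3 by ring,
    show (θ - (θ + 2 * π / 3)) / 2 = -(π / 3) by ring, sin_neg, sin_pi_div_three] at this
  nlinarith [sqrt_nonneg 3]

lemma cos_add_two_pi_div_three_le_cos_add_four_pi_div_three {θ : ℝ} (h0 : 0 ≤ θ) (h1 : θ ≤ π) :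
    cos (θ + 2 * π / 3) ≤ cos (θ + 4 * π / 3) := by
  have hsin : 0 ≤ sin θ := sin_nonneg_of_nonneg_of_le_pi h0 h1
  have := cos_sub_cos (θ + 4 * π / 3) (θ + 2 * π / 3)
  rw [show (θ + 4 * π / 3 + (θ + 2 * π / 3)) / 2 = θ + π by ring,
    show (θ + 4 * π / 3 - (θ + 2 * π / 3)) / 2 = π / 3 by ring, sin_add_pi,
    sin_pi_div_three] at this
  nlinarith [sqrt_nonneg 3]

/-- The Gram matrix of three states with `⟨ψ₁, ψ₂⟩ = ⟨ψ₂, ψ₃⟩ = ⟨ψ₃, ψ₁⟩ = z`. -/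
def symmetricGram (z : ℂ) : Matrix (Fin 3) (Fin 3) ℂ :=
  !![1, z, star z; star z, 1, z; z, star z, 1]

def fourierVec (ζ : ℂ) : Fin 3 → ℂ := ![1, ζ, ζ ^ 2]

def fourierMatrix (ω : ℂ) : Matrix (Fin 3) (Fin 3) ℂ := of fun i k => fourierVec (ω ^ (k : ℕ)) i

def gramEigenvalue (z ζ : ℂ) : ℝ := 1 + 2 * (z * ζ).re

section Eigenvectors

variable {z ζ ω : ℂ}

lemma ofReal_gramEigenvalue (hζ : ζ ^ 3 = 1) :
    (gramEigenvalue z ζ : ℂ) = 1 + z * ζ + conj z * ζ ^ 2 := by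
  have h := Complex.add_conj (z * ζ)
  rw [map_mul, conj_eq_sq_of_pow_three_eq_one hζ] at h
  rw [gramEigenvalue]
  push_cast at h ⊢
  linear_combination -h

lemma symmetricGram_mulVec_fourierVec (hζ : ζ ^ 3 = 1) :
    symmetricGram z *ᵥ fourierVec ζ = (gramEigenvalue z ζ : ℂ) • fourierVec ζ := by
  rw [ofReal_gramEigenvalue hζ]
  ext i
  fin_cases i <;> simp [symmetricGram, fourierVec, mulVec, dotProduct, Fin.sum_univ_three]
  · linear_combination -conj z * hζ
  · linear_combination -(z + conj z * ζ) * hζ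

lemma star_fourierVec_dotProduct_self (hζ : ζ ^ 3 = 1) :
    star (fourierVec ζ) ⬝ᵥ fourierVec ζ = 3 := by
  simp only [dotProduct, fourierVec, Pi.star_apply, RCLike.star_def, Fin.sum_univ_three,
    Fin.isValue, cons_val_zero, map_one, mul_one, cons_val_one, cons_val, map_pow,
    conj_eq_sq_of_pow_three_eq_one hζ]
  linear_combination (ζ ^ 3 + 2) * hζ

lemma star_fourierVec_dotProduct_symmetricGram_mulVec (hζ : ζ ^ 3 = 1) :
    star (fourierVec ζ) ⬝ᵥ symmetricGram z *ᵥ fourierVec ζ =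
      ((3 * gramEigenvalue z ζ : ℝ) : ℂ) := by
  rw [symmetricGram_mulVec_fourierVec hζ, dotProduct_smul, star_fourierVec_dotProduct_self hζ,
    smul_eq_mul]
  push_cast
  ring

lemma gramEigenvalue_pos (h : (symmetricGram z).PosDef) (hζ : ζ ^ 3 = 1) :
    0 < gramEigenvalue z ζ := by
  have hv : fourierVec ζ ≠ 0 := fun hv => by simpa [fourierVec] using congrFun hv 0
  have := h.dotProduct_mulVec_pos hv
  rw [star_fourierVec_dotProduct_symmetricGram_mulVec hζ] at this
  have : (0 : ℝ) < 3 * gramEigenvalue z ζ := by exact_mod_cast this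
  linarith

lemma sum_le_three_mul_gramEigenvalue (hζ : ζ ^ 3 = 1) {x : Fin 3 → ℝ}
    (h : (symmetricGram z - diagonal fun i => (x i : ℂ)).PosSemidef) :
    x 0 + x 1 + x 2 ≤ 3 * gramEigenvalue z ζ := by
  have hv : ∀ i, ‖fourierVec ζ i‖ = 1 := by
    have := Complex.norm_eq_one_of_pow_eq_one hζ (by norm_num)
    intro i; fin_cases i <;> simp [fourierVec, this]
  have := sum_le_re_dotProduct_of_posSemidef_sub_diagonal h hv
  rwa [star_fourierVec_dotProduct_symmetricGram_mulVec hζ, Fin.sum_univ_three,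
    Complex.ofReal_re] at this

lemma fourierMatrix_mul_conjTranspose (hω : IsPrimitiveRoot ω 3) :
    fourierMatrix ω * (fourierMatrix ω)ᴴ = (3 : ℂ) • 1 := by
  have h3 := hω.pow_eq_one
  have hsum : 1 + ω + ω ^ 2 = 0 := by
    simpa [Finset.sum_range_succ] using hω.geom_sum_eq_zero (by norm_num)
  ext i j
  fin_cases i <;> fin_cases j <;>
    simp [fourierMatrix, fourierVec, mul_apply, Fin.sum_univ_three,
      conj_eq_sq_of_pow_three_eq_one h3]
  all_goals grind

lemma symmetricGram_mul_fourierMatrix (hω : ω ^ 3 = 1) :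
    symmetricGram z * fourierMatrix ω =
      fourierMatrix ω * diagonal (fun k : Fin 3 => (gramEigenvalue z (ω ^ (k : ℕ)) : ℂ)) := by
  ext i k
  have hk : (ω ^ (k : ℕ)) ^ 3 = 1 := by rw [← pow_mul, mul_comm, pow_mul, hω, one_pow]
  rw [mul_diagonal]
  simpa [mulVec, dotProduct, mul_apply, fourierMatrix, mul_comm] using
    congrFun (symmetricGram_mulVec_fourierVec (z := z) hk) i

lemma posSemidef_symmetricGram_sub_diagonal (hω : IsPrimitiveRoot ω 3) {μ : ℝ}
    (hμ : ∀ k : Fin 3, μ ≤ gramEigenvalue z (ω ^ (k : ℕ))) :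
    (symmetricGram z - diagonal fun _ => (μ : ℂ)).PosSemidef := by
  set M := symmetricGram z - diagonal fun _ => (μ : ℂ)
  set F := fourierMatrix ω
  set D := diagonal fun k : Fin 3 => ((gramEigenvalue z (ω ^ (k : ℕ)) - μ : ℝ) : ℂ)
  have hD : D.PosSemidef :=
    PosSemidef.diagonal fun k => Complex.zero_le_real.mpr (sub_nonneg.mpr (hμ k))
  have hMF : M * F = F * D := by
    rw [sub_mul, symmetricGram_mul_fourierMatrix hω.pow_eq_one, ← smul_eq_diagonal_mul,
      smul_eq_mul_diagonal, ← mul_sub, diagonal_sub]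
    simp [F, D]
  have hM : M = F * ((3⁻¹ : ℂ) • D) * Fᴴ := calc
    M = M * ((3⁻¹ : ℂ) • (F * Fᴴ)) := by
      rw [fourierMatrix_mul_conjTranspose hω, smul_smul]; norm_num
    _ = F * ((3⁻¹ : ℂ) • D) * Fᴴ := by
      rw [mul_smul_comm, ← mul_assoc, hMF, mul_smul_comm, smul_mul_assoc]
  rw [hM]
  exact (hD.smul (by norm_num [Complex.le_def])).mul_mul_conjTranspose_same F

end Eigenvectors

noncomputable def cubeRootOfUnity : ℂ := Complex.exp (↑(2 * π / 3) * Complex.I)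

lemma isPrimitiveRoot_cubeRootOfUnity : IsPrimitiveRoot cubeRootOfUnity 3 := by
  convert Complex.isPrimitiveRoot_exp 3 (by norm_num) using 2
  rw [cubeRootOfUnity]
  congr 1
  push_cast
  ring

lemma gramEigenvalue_ofReal_mul_exp_mul_cubeRootOfUnity_pow (γ θ : ℝ) (k : ℕ) :
    gramEigenvalue (γ * Complex.exp (θ * Complex.I)) (cubeRootOfUnity ^ k) =
      1 + 2 * γ * cos (θ + 2 * π * k / 3) := by
  rw [gramEigenvalue, cubeRootOfUnity, ← Complex.exp_nat_mul, mul_assoc, ← Complex.exp_add,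
    show (θ : ℂ) * Complex.I + k * (↑(2 * π / 3) * Complex.I) =
        ↑(θ + 2 * π * k / 3) * Complex.I by push_cast; ring,
    Complex.re_ofReal_mul, Complex.exp_ofReal_mul_I_re]
  ring

lemma gramEigenvalue_ofReal_mul_exp_cubeRootOfUnity (γ θ : ℝ) :
    gramEigenvalue (γ * Complex.exp (θ * Complex.I)) cubeRootOfUnity =
      1 + 2 * γ * cos (θ + 2 * π / 3) := by
  simpa using gramEigenvalue_ofReal_mul_exp_mul_cubeRootOfUnity_pow γ θ 1

lemma gramEigenvalue_cubeRootOfUnity_le {γ θ : ℝ} (hγ : 0 ≤ γ) (hθ0 : 0 ≤ θ)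
    (hθ1 : θ ≤ 2 * π / 3) (k : Fin 3) :
    gramEigenvalue (γ * Complex.exp (θ * Complex.I)) cubeRootOfUnity ≤
      gramEigenvalue (γ * Complex.exp (θ * Complex.I)) (cubeRootOfUnity ^ (k : ℕ)) := by
  rw [gramEigenvalue_ofReal_mul_exp_cubeRootOfUnity,
    gramEigenvalue_ofReal_mul_exp_mul_cubeRootOfUnity_pow]
  suffices cos (θ + 2 * π / 3) ≤ cos (θ + 2 * π * (k : ℕ) / 3) by
    nlinarith [mul_le_mul_of_nonneg_left this hγ]
  fin_cases k
  · simpa using cos_add_two_pi_div_three_le_cos (by linarith [pi_pos]) hθ1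
  · simp
  · convert cos_add_two_pi_div_three_le_cos_add_four_pi_div_three hθ0 (by linarith [pi_pos])
      using 3
    push_cast
    ring

theorem three_state_symmetric_general
    (γ θ : ℝ) (hγ0 : 0 < γ)
    (hθ0 : 0 ≤ θ) (hθ1 : θ < 2 * Real.pi / 3)
    (hN : (!![1, (γ : ℂ) * Complex.exp (θ * Complex.I),
              star ((γ : ℂ) * Complex.exp (θ * Complex.I));
            star ((γ : ℂ) * Complex.exp (θ * Complex.I)), 1,
              (γ : ℂ) * Complex.exp (θ * Complex.I);
            (γ : ℂ) * Complex.exp (θ * Complex.I),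
              star ((γ : ℂ) * Complex.exp (θ * Complex.I)), 1] :
      Matrix (Fin 3) (Fin 3) ℂ).PosDef) :
    IsGreatest {p : ℝ | ∃ x : Fin 3 → ℝ, (∀ i, 0 ≤ x i) ∧
        ((!![1, (γ : ℂ) * Complex.exp (θ * Complex.I),
              star ((γ : ℂ) * Complex.exp (θ * Complex.I));
            star ((γ : ℂ) * Complex.exp (θ * Complex.I)), 1,
              (γ : ℂ) * Complex.exp (θ * Complex.I);
            (γ : ℂ) * Complex.exp (θ * Complex.I),
              star ((γ : ℂ) * Complex.exp (θ * Complex.I)), 1] :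
          Matrix (Fin 3) (Fin 3) ℂ) -
          Matrix.diagonal (fun i => (x i : ℂ))).PosSemidef ∧
        p = (1 / 3) * (x 0 + x 1 + x 2)}
      (1 + 2 * γ * Real.cos (θ + 2 * Real.pi / 3)) ∧
    (0 ≤ 1 + 2 * γ * Real.cos (θ + 2 * Real.pi / 3) ∧
      ((!![1, (γ : ℂ) * Complex.exp (θ * Complex.I),
              star ((γ : ℂ) * Complex.exp (θ * Complex.I));
            star ((γ : ℂ) * Complex.exp (θ * Complex.I)), 1,
              (γ : ℂ) * Complex.exp (θ * Complex.I);
            (γ : ℂ) * Complex.exp (θ * Complex.I),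
              star ((γ : ℂ) * Complex.exp (θ * Complex.I)), 1] :
          Matrix (Fin 3) (Fin 3) ℂ) -
        Matrix.diagonal (fun _ =>
          ((1 + 2 * γ * Real.cos (θ + 2 * Real.pi / 3) : ℝ) : ℂ))).PosSemidef) := by
  have hω := isPrimitiveRoot_cubeRootOfUnity
  have hpsd := posSemidef_symmetricGram_sub_diagonal hω
    (gramEigenvalue_cubeRootOfUnity_le hγ0.le hθ0 hθ1.le)
  have hpos := gramEigenvalue_pos hN hω.pow_eq_one
  rw [gramEigenvalue_ofReal_mul_exp_cubeRootOfUnity] at hpsd hpos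
  refine ⟨⟨⟨fun _ => _, fun _ => hpos.le, hpsd, by ring⟩, ?_⟩, hpos.le, hpsd⟩
  rintro p ⟨x, -, hx, rfl⟩
  have := sum_le_three_mul_gramEigenvalue hω.pow_eq_one hx
  rw [gramEigenvalue_ofReal_mul_exp_cubeRootOfUnity] at this
  linarith

/-- Symmetric three states: all mutual inner products equal `γ e^{iθ}` and the
occurrence probabilities are equal. The maximum success probability of
unambiguous discrimination is `1 + 2γ cos(θ + 2π/3)`, attained at
`x₁ = x₂ = x₃ = 1 + 2γ cos(θ + 2π/3)`. -/
theorem three_state_symmetric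
    (γ θ : ℝ) (hγ0 : 0 < γ) (hγ1 : γ ≤ 1)
    (hθ0 : 0 ≤ θ) (hθ1 : θ < 2 * Real.pi / 3)
    (hN : (!![1, (γ : ℂ) * Complex.exp (θ * Complex.I),
              star ((γ : ℂ) * Complex.exp (θ * Complex.I));
            star ((γ : ℂ) * Complex.exp (θ * Complex.I)), 1,
              (γ : ℂ) * Complex.exp (θ * Complex.I);
            (γ : ℂ) * Complex.exp (θ * Complex.I),
              star ((γ : ℂ) * Complex.exp (θ * Complex.I)), 1] :
      Matrix (Fin 3) (Fin 3) ℂ).PosDef) :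
    IsGreatest {p : ℝ | ∃ x : Fin 3 → ℝ, (∀ i, 0 ≤ x i) ∧
        ((!![1, (γ : ℂ) * Complex.exp (θ * Complex.I),
              star ((γ : ℂ) * Complex.exp (θ * Complex.I));
            star ((γ : ℂ) * Complex.exp (θ * Complex.I)), 1,
              (γ : ℂ) * Complex.exp (θ * Complex.I);
            (γ : ℂ) * Complex.exp (θ * Complex.I),
              star ((γ : ℂ) * Complex.exp (θ * Complex.I)), 1] :
          Matrix (Fin 3) (Fin 3) ℂ) -
          Matrix.diagonal (fun i => (x i : ℂ))).PosSemidef ∧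
        p = (1 / 3) * (x 0 + x 1 + x 2)}
      (1 + 2 * γ * Real.cos (θ + 2 * Real.pi / 3)) ∧
    (0 ≤ 1 + 2 * γ * Real.cos (θ + 2 * Real.pi / 3) ∧
      ((!![1, (γ : ℂ) * Complex.exp (θ * Complex.I),
              star ((γ : ℂ) * Complex.exp (θ * Complex.I));
            star ((γ : ℂ) * Complex.exp (θ * Complex.I)), 1,
              (γ : ℂ) * Complex.exp (θ * Complex.I);
            (γ : ℂ) * Complex.exp (θ * Complex.I),
              star ((γ : ℂ) * Complex.exp (θ * Complex.I)), 1] :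
          Matrix (Fin 3) (Fin 3) ℂ) -
        Matrix.diagonal (fun _ =>
          ((1 + 2 * γ * Real.cos (θ + 2 * Real.pi / 3) : ℝ) : ℂ))).PosSemidef) :=
  three_state_symmetric_general γ θ hγ0 hθ0 hθ1 hN
end
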